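/- arXiv:2105.00497 — 11 statements merged into one kernel-verified Lean document; each statement's English description precedes it below -/
import Mathlib

section
/- The separating operator of Example 1 satisfies condition A3: if g : ℝⁿ → ℝ is convex with K = {x : g(x) ≤ 0} nonempty, S(x) = K if x ∈ K and S(x) = {z : uₓᵀ(z − x) + g(x) ≤ 0} for some uₓ ∈ ∂g(x) otherwise, and zₖ → z* with dist(zₖ, S(zₖ)) → 0, then z* ∈ K. -/
/-!
Outside `K` the subgradient inequality gives `g x ≤ ‖uₓ‖ * dist (x, S x)`. Near `z*` the convex,
hence continuous, function `g` is bounded, and a bound `|g| ≤ M` on a ball of radius `r` around `x`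
bounds every subgradient at `x` by `2M / r`. So eventually `g (zₖ) ≤ C * dist (zₖ, S zₖ) → 0`, and
`g z* ≤ 0` by continuity.
-/

open Filter Topology Metric
open scoped RealInnerProductSpace

section

variable {E : Type*} [NormedAddCommGroup E] [InnerProductSpace ℝ E]

theorem le_norm_mul_infDist_halfspace {u x : E} {a : ℝ}
    (hne : {z | ⟪u, z - x⟫ + a ≤ 0}.Nonempty) :
    a ≤ ‖u‖ * infDist x {z | ⟪u, z - x⟫ + a ≤ 0} := by
  rcases eq_or_ne u 0 with rfl | hu
  · obtain ⟨z, hz⟩ := hne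
    simpa using hz
  have hnorm : 0 < ‖u‖ := norm_pos_iff.2 hu
  rw [← div_le_iff₀' hnorm, le_infDist hne]
  intro z hz
  rw [div_le_iff₀' hnorm]
  calc a ≤ ⟪u, x - z⟫ := by rw [← neg_sub, inner_neg_right]; linarith [hz.out]
    _ ≤ ‖u‖ * ‖x - z‖ := real_inner_le_norm _ _
    _ = ‖u‖ * dist x z := by rw [dist_eq_norm]

theorem mul_norm_le_of_subgradient {g : E → ℝ} {x u : E} {r M : ℝ} (hr : 0 ≤ r)
    (hM : ∀ y ∈ closedBall x r, |g y| ≤ M) (hu : ∀ y, g x + ⟪u, y - x⟫ ≤ g y) :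
    r * ‖u‖ ≤ 2 * M := by
  have hgx := abs_le.1 (hM x (mem_closedBall_self hr))
  rcases eq_or_ne u 0 with rfl | hu0
  · simp only [norm_zero, mul_zero]
    linarith
  have hnorm : 0 < ‖u‖ := norm_pos_iff.2 hu0
  -- test the subgradient inequality in the direction of `u`, at distance `r`
  set y := x + (r / ‖u‖) • u
  have hy : y ∈ closedBall x r := by
    rw [mem_closedBall, dist_eq_norm, add_sub_cancel_left, norm_smul, Real.norm_eq_abs,
      abs_of_nonneg (div_nonneg hr hnorm.le), div_mul_cancel₀ _ hnorm.ne']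
  have hinner : ⟪u, y - x⟫ = r * ‖u‖ := by
    rw [add_sub_cancel_left, real_inner_smul_right, real_inner_self_eq_norm_sq]
    field_simp
  linarith [hu y, (abs_le.1 (hM y hy)).2]

theorem le_mul_infDist_halfspace_of_subgradient {g : E → ℝ} {x u y₀ : E} {M : ℝ}
    (hM : ∀ y ∈ closedBall x 1, |g y| ≤ M) (hu : ∀ y, g x + ⟪u, y - x⟫ ≤ g y)
    (hy₀ : g y₀ ≤ 0) :
    g x ≤ 2 * M * infDist x {z | ⟪u, z - x⟫ + g x ≤ 0} := by
  have hne : {z | ⟪u, z - x⟫ + g x ≤ 0}.Nonempty := ⟨y₀, show ⟪u, y₀ - x⟫ + g x ≤ 0 by linarith [hu y₀]⟩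
  have hu_le : ‖u‖ ≤ 2 * M := by simpa using mul_norm_le_of_subgradient zero_le_one hM hu
  exact (le_norm_mul_infDist_halfspace hne).trans
    (mul_le_mul_of_nonneg_right hu_le infDist_nonneg)

end

theorem stmt_5_general {n : ℕ} (g : EuclideanSpace ℝ (Fin n) → ℝ)
    (hg : ConvexOn ℝ Set.univ g)
    (K : Set (EuclideanSpace ℝ (Fin n))) (hK : K = {x | g x ≤ 0}) (hKne : K.Nonempty)
    (u : EuclideanSpace ℝ (Fin n) → EuclideanSpace ℝ (Fin n))
    (hu : ∀ x ∉ K, ∀ y, g x + ⟪u x, y - x⟫ ≤ g y)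
    (S : EuclideanSpace ℝ (Fin n) → Set (EuclideanSpace ℝ (Fin n)))
    (hS2 : ∀ x ∉ K, S x = {z | ⟪u x, z - x⟫ + g x ≤ 0})
    (z : ℕ → EuclideanSpace ℝ (Fin n)) (zstar : EuclideanSpace ℝ (Fin n))
    (hz : Tendsto z atTop (𝓝 zstar))
    (hdist : Tendsto (fun k => Metric.infDist (z k) (S (z k))) atTop (𝓝 0)) :
    zstar ∈ K := by
  subst hK
  obtain ⟨y₀, hy₀⟩ := hKne
  have hcont : Continuous g := hg.locallyLipschitz.continuous
  obtain ⟨M, hM⟩ := (isCompact_closedBall zstar 2).exists_bound_of_continuousOn hcont.continuousOn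
  have hM0 : 0 ≤ M := (norm_nonneg _).trans (hM zstar (mem_closedBall_self zero_le_two))
  have hev : ∀ᶠ k in atTop, g (z k) ≤ 2 * M * infDist (z k) (S (z k)) := by
    filter_upwards [hz (closedBall_mem_nhds zstar one_pos)] with k hk
    by_cases hzk : g (z k) ≤ 0
    · exact hzk.trans (mul_nonneg (by linarith) infDist_nonneg)
    have hball : closedBall (z k) 1 ⊆ closedBall zstar 2 :=
      closedBall_subset_closedBall' (by linarith [mem_closedBall.1 hk])
    rw [hS2 _ hzk]
    exact le_mul_infDist_halfspace_of_subgradient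
      (fun y hy => Real.norm_eq_abs (g y) ▸ hM y (hball hy)) (hu _ hzk) hy₀
  exact le_of_tendsto_of_tendsto ((hcont.tendsto zstar).comp hz)
    (by simpa using hdist.const_mul (2 * M)) hev

theorem stmt_5 {n : ℕ} (g : EuclideanSpace ℝ (Fin n) → ℝ)
    (hg : ConvexOn ℝ Set.univ g)
    (K : Set (EuclideanSpace ℝ (Fin n))) (hK : K = {x | g x ≤ 0}) (hKne : K.Nonempty)
    (u : EuclideanSpace ℝ (Fin n) → EuclideanSpace ℝ (Fin n))
    (hu : ∀ x ∉ K, ∀ y, g x + ⟪u x, y - x⟫ ≤ g y)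
    (S : EuclideanSpace ℝ (Fin n) → Set (EuclideanSpace ℝ (Fin n)))
    (hS1 : ∀ x ∈ K, S x = K)
    (hS2 : ∀ x ∉ K, S x = {z | ⟪u x, z - x⟫ + g x ≤ 0})
    (z : ℕ → EuclideanSpace ℝ (Fin n)) (zstar : EuclideanSpace ℝ (Fin n))
    (hz : Tendsto z atTop (𝓝 zstar))
    (hdist : Tendsto (fun k => Metric.infDist (z k) (S (z k))) atTop (𝓝 0)) :
    zstar ∈ K :=
  stmt_5_general g hg K hK hKne u hu S hS2 z zstar hz hdist
end

section
/- Let K ⊆ ℝⁿ be closed convex, U ⊆ ℝⁿ an affine subspace, with K ∩ U nonempty. Let S be a separating operator for K, P^S(x) the projection of x onto S(x), P_U the projection onto U, and T^S = P_U ∘ P^S. Then for all z ∈ K ∩ U and all x ∈ ℝⁿ: ‖T^S(x) − z‖² ≤ ‖x − z‖² − ‖T^S(x) − P^S(x)‖² − ‖P^S(x) − x‖². -/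
open Filter Topology
open scoped RealInnerProductSpace

lemma firm_aux {E : Type*} [NormedAddCommGroup E] [InnerProductSpace ℝ E]
    {s : Set E} (hs : Convex ℝ s) {x v z : E} (hv : v ∈ s) (hz : z ∈ s)
    (hmin : ∀ w ∈ s, dist x v ≤ dist x w) :
    ‖v - z‖ ^ 2 ≤ ‖x - z‖ ^ 2 - ‖v - x‖ ^ 2 := by
  have hne : s.Nonempty := ⟨v, hv⟩
  have hinf : ‖x - v‖ = ⨅ w : s, ‖x - w‖ := by
    have : Nonempty s := ⟨⟨v, hv⟩⟩
    apply le_antisymm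
    · exact le_ciInf fun w => by simpa [dist_eq_norm] using hmin w w.2
    · exact ciInf_le ⟨0, fun r ⟨w, hw⟩ => hw ▸ norm_nonneg _⟩ (⟨v, hv⟩ : s)
  have h := (norm_eq_iInf_iff_real_inner_le_zero hs hv).mp hinf z hz
  have expand : ‖x - z‖ ^ 2 = ‖x - v‖ ^ 2 + 2 * ⟪x - v, v - z⟫ + ‖v - z‖ ^ 2 := by
    have : x - z = (x - v) + (v - z) := by abel
    rw [this, norm_add_sq_real]

  have hip : (0:ℝ) ≤ ⟪x - v, v - z⟫ := by
    have : ⟪x - v, v - z⟫ = -⟪x - v, z - v⟫ := by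
      rw [← inner_neg_right]; congr 1; abel
    linarith [this ▸ neg_nonneg.mpr h]
  have : ‖v - x‖ = ‖x - v‖ := norm_sub_rev _ _
  nlinarith [norm_nonneg (x - v)]

theorem stmt_6 {n : ℕ} (K U : Set (EuclideanSpace ℝ (Fin n)))
    (hKcl : IsClosed K) (hKcv : Convex ℝ K)
    (hU : ∃ (Q : EuclideanSpace ℝ (Fin n) →ₗ[ℝ] EuclideanSpace ℝ (Fin n))
      (b : EuclideanSpace ℝ (Fin n)), U = {x | Q x = b})
    (hKU : (K ∩ U).Nonempty)
    (S : EuclideanSpace ℝ (Fin n) → Set (EuclideanSpace ℝ (Fin n)))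
    (hA1 : ∀ x, IsClosed (S x) ∧ Convex ℝ (S x))
    (hA2 : ∀ x, K ⊆ S x)
    (hA3 : ∀ (z : ℕ → EuclideanSpace ℝ (Fin n)) (zstar : EuclideanSpace ℝ (Fin n)),
      Tendsto z atTop (𝓝 zstar) →
      Tendsto (fun k => Metric.infDist (z k) (S (z k))) atTop (𝓝 0) → zstar ∈ K)
    (PS PU : EuclideanSpace ℝ (Fin n) → EuclideanSpace ℝ (Fin n))
    (hPS : ∀ x, PS x ∈ S x ∧ ∀ y ∈ S x, dist x (PS x) ≤ dist x y)
    (hPU : ∀ x, PU x ∈ U ∧ ∀ y ∈ U, dist x (PU x) ≤ dist x y) :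
    ∀ z ∈ K ∩ U, ∀ x,
      ‖PU (PS x) - z‖ ^ 2 ≤ ‖x - z‖ ^ 2 - ‖PU (PS x) - PS x‖ ^ 2 - ‖PS x - x‖ ^ 2 := by
  rintro z ⟨hzK, hzU⟩ x
  obtain ⟨Q, b, rfl⟩ := hU
  have hUcv : Convex ℝ {x | Q x = b} := by
    have := (convex_singleton b).linear_preimage Q
    simpa [Set.preimage] using this
  have h1 := firm_aux (hA1 x).2 (hPS x).1 (hA2 x hzK) (hPS x).2
  have h2 := firm_aux hUcv (hPU (PS x)).1 hzU (hPU (PS x)).2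
  linarith
end

section
/- With K, U, S as above and C^S the circumcentered approximate-reflection operator, for all z ∈ K ∩ U and all x ∈ U it holds ‖C^S(x) − z‖² ≤ ‖x − z‖² − ‖C^S(x) − x‖², and moreover C^S(x) ∈ U. -/
open Filter Topology
open scoped RealInnerProductSpace


lemma proj_vi_aux {n : ℕ} {T : Set (EuclideanSpace ℝ (Fin n))} (hTc : Convex ℝ T)
    {p y : EuclideanSpace ℝ (Fin n)} (hp : p ∈ T)
    (hmin : ∀ w ∈ T, dist y p ≤ dist y w) :
    ∀ u ∈ T, ⟪y - p, u - p⟫ ≤ 0 := by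
  intro u hu
  by_contra hcon
  push_neg at hcon
  set d := u - p with hd
  have hkey : ∀ θ : ℝ, 0 < θ → θ ≤ 1 → 2 * ⟪y - p, d⟫ ≤ θ * ‖d‖ ^ 2 := by
    intro θ hθ0 hθ1
    have hmem : p + θ • d ∈ T := by
      have h := hTc hp hu (by linarith : (0:ℝ) ≤ 1 - θ) (le_of_lt hθ0) (by ring)
      have he : (1 - θ) • p + θ • u = p + θ • d := by rw [hd]; module
      rwa [he] at h
    have hdist := hmin _ hmem
    rw [dist_eq_norm, dist_eq_norm] at hdist
    have h1 : y - (p + θ • d) = (y - p) - θ • d := by module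
    have hsq : ‖y - (p + θ • d)‖ ^ 2
        = ‖y - p‖ ^ 2 - 2 * θ * ⟪y - p, d⟫ + θ ^ 2 * ‖d‖ ^ 2 := by
      rw [h1, norm_sub_sq_real, real_inner_smul_right, norm_smul]
      simp only [Real.norm_eq_abs, mul_pow, sq_abs]
      ring
    have h2 : ‖y - p‖ ^ 2 ≤ ‖y - (p + θ • d)‖ ^ 2 := by
      nlinarith [hdist, norm_nonneg (y - p), norm_nonneg (y - (p + θ • d))]
    nlinarith [h2, hsq, hθ0]
  rcases eq_or_ne d 0 with h0 | h0
  · rw [h0, inner_zero_right] at hcon; linarith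
  · have hdn : 0 < ‖d‖ ^ 2 := pow_pos (norm_pos_iff.mpr h0) 2
    set θ := min 1 (⟪y - p, d⟫ / ‖d‖ ^ 2) with hθ
    have hθ0 : 0 < θ := lt_min one_pos (div_pos hcon hdn)
    have hθ1 : θ ≤ 1 := min_le_left _ _
    have h3 := hkey θ hθ0 hθ1
    have h4 : θ * ‖d‖ ^ 2 ≤ ⟪y - p, d⟫ := by
      have := min_le_right 1 (⟪y - p, d⟫ / ‖d‖ ^ 2)
      calc θ * ‖d‖ ^ 2 ≤ (⟪y - p, d⟫ / ‖d‖ ^ 2) * ‖d‖ ^ 2 := by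
            exact mul_le_mul_of_nonneg_right this (le_of_lt hdn)
        _ = ⟪y - p, d⟫ := by field_simp
    linarith

set_option maxHeartbeats 2000000 in
theorem stmt_9 {n : ℕ} (K U : Set (EuclideanSpace ℝ (Fin n)))
    (hKcl : IsClosed K) (hKcv : Convex ℝ K)
    (hU : ∃ (Q : EuclideanSpace ℝ (Fin n) →ₗ[ℝ] EuclideanSpace ℝ (Fin n))
      (b : EuclideanSpace ℝ (Fin n)), U = {x | Q x = b})
    (hKU : (K ∩ U).Nonempty)
    (S : EuclideanSpace ℝ (Fin n) → Set (EuclideanSpace ℝ (Fin n)))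
    (hA1 : ∀ x, IsClosed (S x) ∧ Convex ℝ (S x))
    (hA2 : ∀ x, K ⊆ S x)
    (hA3 : ∀ (z : ℕ → EuclideanSpace ℝ (Fin n)) (zstar : EuclideanSpace ℝ (Fin n)),
      Tendsto z atTop (𝓝 zstar) →
      Tendsto (fun k => Metric.infDist (z k) (S (z k))) atTop (𝓝 0) → zstar ∈ K)
    (PS PU : EuclideanSpace ℝ (Fin n) → EuclideanSpace ℝ (Fin n))
    (hPS : ∀ y, PS y ∈ S y ∧ ∀ w ∈ S y, dist y (PS y) ≤ dist y w)
    (hPU : ∀ y, PU y ∈ U ∧ ∀ w ∈ U, dist y (PU y) ≤ dist y w)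
    (RS RU : EuclideanSpace ℝ (Fin n) → EuclideanSpace ℝ (Fin n))
    (hRS : ∀ y, RS y = (2 : ℝ) • PS y - y)
    (hRU : ∀ y, RU y = (2 : ℝ) • PU y - y)
    (CS : EuclideanSpace ℝ (Fin n) → EuclideanSpace ℝ (Fin n))
    (hCS : ∀ x ∈ U,
      CS x ∈ affineSpan ℝ ({x, RS x, RU (RS x)} : Set (EuclideanSpace ℝ (Fin n))) ∧
      dist (CS x) x = dist (CS x) (RS x) ∧ dist (CS x) x = dist (CS x) (RU (RS x))) :
    ∀ z ∈ K ∩ U, ∀ x ∈ U,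
      (‖CS x - z‖ ^ 2 ≤ ‖x - z‖ ^ 2 - ‖CS x - x‖ ^ 2) ∧ CS x ∈ U := by
  obtain ⟨Q, b, rfl⟩ := hU
  intro z hz x hx
  obtain ⟨hzK, hzU⟩ := hz
  have hzU' : Q z = b := hzU
  have hxU : Q x = b := hx
  obtain ⟨hCspan, hC2, hC3⟩ := hCS x hx
  set Px := PS x with hPxdef
  set p₂ := RS x with hp2def
  set q := PU p₂ with hqdef
  set C := CS x with hCdef
  have hp2 : p₂ = (2 : ℝ) • Px - x := hRS x
  have hp3 : RU p₂ = (2 : ℝ) • q - p₂ := hRU p₂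
  have hqU : Q q = b := (hPU p₂).1
  -- U is convex
  have hUconv : Convex ℝ {y | Q y = b} := by
    intro u hu u' hu' θ₁ θ₂ h1 h2 hsum
    simp only [Set.mem_setOf_eq, map_add, map_smul] at *
    rw [hu, hu', ← add_smul, hsum, one_smul]
  -- orthogonality of p₂ - q to differences of points of U
  have hVIU := proj_vi_aux hUconv (hPU p₂).1 (hPU p₂).2
  have hw0 : ∀ u u', Q u = b → Q u' = b → ⟪p₂ - q, u - u'⟫ = 0 := by
    have key : ∀ u, Q u = b → ⟪p₂ - q, u - q⟫ = 0 := by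
      intro u hu
      have h1 : ⟪p₂ - q, u - q⟫ ≤ 0 := hVIU u hu
      have hmem : ((2:ℝ) • q - u) ∈ {y | Q y = b} := by
        simp only [Set.mem_setOf_eq, map_sub, map_smul, hu, hqU]
        module
      have h2 : ⟪p₂ - q, ((2:ℝ) • q - u) - q⟫ ≤ 0 := hVIU _ hmem
      have hveq : ((2:ℝ) • q - u) - q = -(u - q) := by module
      rw [hveq, inner_neg_right] at h2
      linarith
    intro u u' hu hu'
    have := key u hu
    have := key u' hu'
    have hsplit : ⟪p₂ - q, u - u'⟫ = ⟪p₂ - q, u - q⟫ - ⟪p₂ - q, u' - q⟫ := by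
      rw [← inner_sub_right]; congr 1; module
    rw [hsplit]; linarith
  set v := q - x with hvdef
  set w := p₂ - q with hwdef
  have hvw : ⟪v, w⟫ = 0 := by
    rw [real_inner_comm]; exact hw0 q x hqU hxU
  have hwv : ⟪w, v⟫ = 0 := hw0 q x hqU hxU
  set A := ‖v‖ ^ 2 with hAdef
  set B := ‖w‖ ^ 2 with hBdef
  -- inner products of combinations
  have hinner : ∀ s r s' r' : ℝ,
      ⟪s • v + r • w, s' • v + r' • w⟫ = s * s' * A + r * r' * B := by
    intro s r s' r'
    simp only [inner_add_left, inner_add_right, real_inner_smul_left, real_inner_smul_right,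
      hvw, hwv, mul_zero, real_inner_self_eq_norm_sq, hAdef, hBdef]
    ring
  have hsq : ∀ s r : ℝ, ‖s • v + r • w‖ ^ 2 = s ^ 2 * A + r ^ 2 * B := by
    intro s r
    rw [← real_inner_self_eq_norm_sq, hinner]; ring
  -- C - x lies in span of the two directions
  have hp2vw : p₂ - x = v + w := by rw [hvdef, hwdef]; module
  have hp3vw : RU p₂ - x = v - w := by rw [hp3, hvdef, hwdef]; module
  have hspan : C - x ∈ Submodule.span ℝ ({p₂ - x, RU p₂ - x} :
      Set (EuclideanSpace ℝ (Fin n))) := by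
    have h1 : C -ᵥ x ∈ vectorSpan ℝ ({x, p₂, RU p₂} : Set (EuclideanSpace ℝ (Fin n))) := by
      rw [← direction_affineSpan]
      exact AffineSubspace.vsub_mem_direction hCspan (mem_affineSpan ℝ (by simp))
    have h2 : vectorSpan ℝ ({x, p₂, RU p₂} : Set (EuclideanSpace ℝ (Fin n))) ≤
        Submodule.span ℝ ({p₂ - x, RU p₂ - x} : Set (EuclideanSpace ℝ (Fin n))) := by
      rw [vectorSpan_def]
      refine Submodule.span_le.2 ?_
      rintro d ⟨u, hu, u', hu', rfl⟩
      have key : ∀ y ∈ ({x, p₂, RU p₂} : Set (EuclideanSpace ℝ (Fin n))),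
          y - x ∈ Submodule.span ℝ ({p₂ - x, RU p₂ - x} :
            Set (EuclideanSpace ℝ (Fin n))) := by
        rintro y (rfl | rfl | rfl)
        · simpa using Submodule.zero_mem _
        · exact Submodule.subset_span (by simp)
        · exact Submodule.subset_span (by simp)
      simp only [vsub_eq_sub]
      have huu : u - u' = (u - x) - (u' - x) := by module
      rw [huu]
      exact Submodule.sub_mem _ (key u hu) (key u' hu')
    exact h2 (by simpa [vsub_eq_sub] using h1)
  obtain ⟨a, c, hac⟩ := Submodule.mem_span_pair.1 hspan
  have hCx : C - x = (a + c) • v + (a - c) • w := by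
    rw [← hac, hp2vw, hp3vw]; module
  -- squared distances
  have e1 : ‖C - x‖ ^ 2 = ‖C - p₂‖ ^ 2 := by
    rw [← dist_eq_norm, ← dist_eq_norm, hC2]
  have e2 : ‖C - x‖ ^ 2 = ‖C - RU p₂‖ ^ 2 := by
    rw [← dist_eq_norm, ← dist_eq_norm, hC3]
  have hCp2 : C - p₂ = (a + c - 1) • v + (a - c - 1) • w := by
    have : C - p₂ = (C - x) - (p₂ - x) := by module
    rw [this, hCx, hp2vw]; module
  have hCp3 : C - RU p₂ = (a + c - 1) • v + (a - c + 1) • w := by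
    have : C - RU p₂ = (C - x) - (RU p₂ - x) := by module
    rw [this, hCx, hp3vw]; module
  rw [hCx, hCp2, hsq, hsq] at e1
  rw [hCx, hCp3, hsq, hsq] at e2
  -- the w-component of C - x vanishes
  have hacB : (a - c) * B = 0 := by linear_combination (e1 - e2) / 4
  have hwcomp : (a - c) • w = 0 := by
    have hn : ‖(a - c) • w‖ ^ 2 = 0 := by
      have := hsq 0 (a - c)
      simp only [zero_smul, zero_add] at this
      rw [this]; nlinarith [hacB]
    simpa using pow_eq_zero_iff (n := 2) (by norm_num) |>.1 hn
  set t := a + c with htdef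
  have hCt : C - x = t • v := by rw [hCx, hwcomp, add_zero]
  have hB : B = (2 * t - 1) * A := by linear_combination -e1 + 2 * hacB
  -- C ∈ U
  have hCU : Q C = b := by
    have hC : C = x + t • v := by rw [← hCt]; module
    rw [hC]
    simp only [map_add, map_smul, hvdef, map_sub, hqU, hxU, sub_self, smul_zero, add_zero]
  refine ⟨?_, hCU⟩
  -- key inner product inequality
  have hkey : ⟪x - C, z - C⟫ ≤ 0 := by
    rcases eq_or_ne v 0 with hv0 | hv0
    · have : x - C = -(t • v) := by rw [← hCt]; module
      rw [this, hv0]; simp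
    · have hA : 0 < A := by
        exact pow_pos (norm_pos_iff.mpr hv0) 2
      have ht : 0 ≤ t := by nlinarith [hBdef ▸ (by positivity : (0:ℝ) ≤ ‖w‖ ^ 2)]
      -- inner products with z - C
      have hwzC : ⟪w, z - C⟫ = 0 := hw0 z C hzU' hCU
      have hPxx : Px - x = (1/2 : ℝ) • v + (1/2 : ℝ) • w := by
        have h3 : (2:ℝ) • Px - x - x = v + w := by rw [← hp2]; exact hp2vw
        have h4 : Px - x = (2:ℝ)⁻¹ • ((2:ℝ) • Px - x - x) := by module
        rw [h4, h3]; module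
      have hPxC : Px - C = (1/2 - t : ℝ) • v + (1/2 : ℝ) • w := by
        have h : Px - C = (Px - x) - (C - x) := by module
        rw [h, hPxx, hCt]; module
      have hPxC0 : ⟪Px - x, Px - C⟫ = 0 := by
        rw [hPxx, hPxC, hinner]
        linear_combination hB / 4
      have hVIS : ⟪x - Px, z - Px⟫ ≤ 0 :=
        proj_vi_aux (hA1 x).2 (hPS x).1 (hPS x).2 z (hA2 x hzK)
      have hPxzC : 0 ≤ ⟪Px - x, z - C⟫ := by
        have hsplit : ⟪Px - x, z - C⟫ = ⟪Px - x, z - Px⟫ + ⟪Px - x, Px - C⟫ := by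
          rw [← inner_add_right]; congr 1; module
        have hneg : ⟪Px - x, z - Px⟫ = -⟪x - Px, z - Px⟫ := by
          rw [← inner_neg_left]; congr 1; module
        rw [hsplit, hPxC0, hneg]; linarith
      have hxCv : ⟪x - C, z - C⟫ = -(2 * t * ⟪Px - x, z - C⟫) := by
        have h1 : x - C = -(t • v) := by rw [← hCt]; module
        have h2 : v = (2:ℝ) • (Px - x) - w := by
          rw [hPxx]; module
        have hv_inner : ⟪v, z - C⟫ = 2 * ⟪Px - x, z - C⟫ := by
          rw [h2, inner_sub_left, real_inner_smul_left, hwzC]; ring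
        rw [h1, inner_neg_left, real_inner_smul_left, hv_inner]; ring
      rw [hxCv]
      nlinarith [hPxzC, ht]
  -- conclude
  have hexp : ‖x - z‖ ^ 2 = ‖x - C‖ ^ 2 + 2 * ⟪x - C, C - z⟫ + ‖C - z‖ ^ 2 := by
    have h := norm_add_sq_real (x - C) (C - z)
    rw [sub_add_sub_cancel] at h
    linarith
  have hflip : ⟪x - C, C - z⟫ = -⟪x - C, z - C⟫ := by
    rw [← inner_neg_right]; congr 1; module
  have hsym2 : ‖x - C‖ ^ 2 = ‖C - x‖ ^ 2 := by rw [norm_sub_rev]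
  rw [hflip] at hexp
  linarith [hexp, hkey, hsym2]
end

section
/- Let K ⊆ ℝⁿ be closed convex, U an affine subspace with K ∩ U ≠ ∅, and S a separating operator for K satisfying A1–A3. The CARM sequence x^{k+1} = C^S(x^k), starting from x⁰ ∈ U, is well defined, contained in U, Fejér monotone with respect to K ∩ U, and converges to a point of K ∩ U. -/
open Filter Topology
open scoped RealInnerProductSpace

/-!
Fix `z ∈ U`, `p = P_S(z)`, `r = 2p - z`, `q = P_U(r)` and the circumcenter `c`. Being equidistant
from `z` and its reflection `r` through `p`, `c` lies on the hyperplane through `p` orthogonal to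
`z - p`; being equidistant from `r` and its reflection through `q`, while `z - q ⊥ r - q`, it lies
on the line through `z` and `q`: `c = z + μ (q - z)`, so `c ∈ U`. Then
`z - c = 2μ (z - p) + μ (r - q)` with `r - q` orthogonal to `U`, whence
`⟪z - c, y - c⟫ = 2μ ⟪z - p, y - p⟫ ≤ 0` for `y ∈ S(z) ∩ U ⊇ K ∩ U`, where `μ ≥ 0` unless `z = p`
because `μ ‖z - q‖² = 2 ‖z - p‖²`. This strong Fejér inequality makes the steps `‖x^{k+1} - x^k‖`
tend to `0`; they dominate `dist(x^k, S(x^k))`, so by A3 every cluster point lies in `K ∩ U`, and a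
Fejér monotone sequence with a cluster point in the set converges to it.
-/

variable {E : Type*} [NormedAddCommGroup E] [InnerProductSpace ℝ E]

theorem inner_sub_nonpos_of_forall_dist_le {S : Set E} (hS : Convex ℝ S) {z p : E} (hp : p ∈ S)
    (hmin : ∀ w ∈ S, dist z p ≤ dist z w) {w : E} (hw : w ∈ S) : ⟪z - p, w - p⟫ ≤ 0 := by
  have : Nonempty S := ⟨⟨p, hp⟩⟩
  refine (norm_eq_iInf_iff_real_inner_le_zero hS hp).1 ?_ w hw
  have hbdd : BddBelow (Set.range fun w : S => ‖z - w‖) := ⟨0, by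
    rintro _ ⟨w, rfl⟩
    exact norm_nonneg _⟩
  refine le_antisymm (le_ciInf fun w => ?_) (ciInf_le hbdd (⟨p, hp⟩ : S))
  simpa only [dist_eq_norm] using hmin w w.2

theorem AffineSubspace.inner_sub_eq_zero_of_forall_dist_le {U : AffineSubspace ℝ E} {z q : E}
    (hq : q ∈ U) (hmin : ∀ w ∈ U, dist z q ≤ dist z w) {w : E} (hw : w ∈ U) :
    ⟪z - q, w - q⟫ = 0 := by
  have hw' : (2 : ℝ) • (q - w) + w ∈ U := U.smul_vsub_vadd_mem 2 hq hw hw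
  have h₁ := inner_sub_nonpos_of_forall_dist_le U.convex hq hmin hw
  have h₂ := inner_sub_nonpos_of_forall_dist_le U.convex hq hmin hw'
  have : (2 : ℝ) • (q - w) + w - q = -(w - q) := by module
  rw [this, inner_neg_right] at h₂
  linarith

theorem inner_sub_eq_zero_of_dist_eq_reflection {c z p : E}
    (h : dist c z = dist c ((2 : ℝ) • p - z)) : ⟪c - p, z - p⟫ = 0 := by
  have h₁ : c - z = (c - p) - (z - p) := by abel
  have h₂ : c - ((2 : ℝ) • p - z) = (c - p) + (z - p) := by module
  rw [dist_eq_norm, dist_eq_norm, h₁, h₂] at h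
  have := congrArg (· ^ 2) h
  simp only [norm_sub_sq_real, norm_add_sq_real] at this
  linarith

theorem exists_eq_add_smul_add_smul_of_mem_affineSpan {k V : Type*} [Ring k] [AddCommGroup V]
    [Module k V] {z r r' c : V} (hc : c ∈ affineSpan k {z, r, r'}) :
    ∃ s t : k, c = z + s • (r - z) + t • (r' - z) := by
  have hz : z ∈ ({z, r, r'} : Set V) := by simp
  have h := AffineSubspace.vsub_mem_direction hc (subset_affineSpan k _ hz)
  rw [direction_affineSpan, vectorSpan_eq_span_vsub_set_right k hz] at h
  simp only [Set.image_insert_eq, Set.image_singleton, vsub_eq_sub, sub_self,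
    Submodule.span_insert_zero] at h
  obtain ⟨s, t, hst⟩ := Submodule.mem_span_pair.mp h
  exact ⟨s, t, by rw [add_assoc, hst]; abel⟩

theorem exists_eq_add_smul_of_mem_affineSpan_reflection {z q r c : E}
    (hc : c ∈ affineSpan ℝ {z, r, (2 : ℝ) • q - r}) (hzq : ⟪r - q, z - q⟫ = 0)
    (hcq : ⟪c - q, r - q⟫ = 0) : ∃ μ : ℝ, c = z + μ • (q - z) := by
  obtain ⟨s, t, rfl⟩ := exists_eq_add_smul_add_smul_of_mem_affineSpan hc
  have hdecomp : z + s • (r - z) + t • ((2 : ℝ) • q - r - z) - q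
      = (1 - s - t) • (z - q) + (s - t) • (r - q) := by module
  rw [hdecomp, inner_add_left, real_inner_smul_left, real_inner_smul_left, real_inner_comm,
    hzq, real_inner_self_eq_norm_sq, mul_zero, zero_add, mul_eq_zero, sq_eq_zero_iff,
    norm_eq_zero] at hcq
  refine ⟨s + t, ?_⟩
  rcases hcq with hst | hrq
  · rw [sub_eq_zero] at hst
    subst hst
    module
  · rw [sub_eq_zero] at hrq
    subst hrq
    module

theorem norm_sub_le_norm_sub_of_inner_eq_zero {z p c : E} (h : ⟪c - p, z - p⟫ = 0) :
    ‖z - p‖ ≤ ‖z - c‖ := by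
  have hpyth : ‖z - c‖ ^ 2 = ‖z - p‖ ^ 2 + ‖c - p‖ ^ 2 := by
    rw [show z - c = (z - p) - (c - p) by abel, norm_sub_sq_real, real_inner_comm, h]
    ring
  refine (pow_le_pow_iff_left₀ (norm_nonneg _) (norm_nonneg _) two_ne_zero).1 ?_
  rw [hpyth]
  exact le_add_of_nonneg_right (sq_nonneg _)

theorem inner_sub_nonpos_of_eq_add_smul {z p r q c y : E} {μ : ℝ} (hr : r = (2 : ℝ) • p - z)
    (hc : c = z + μ • (q - z)) (hcp : ⟪c - p, z - p⟫ = 0) (hzq : ⟪r - q, z - q⟫ = 0)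
    (hyq : ⟪r - q, y - q⟫ = 0) (hy : ⟪z - p, y - p⟫ ≤ 0) : ⟪z - c, y - c⟫ ≤ 0 := by
  have hzc : z - c = μ • (z - q) := by rw [hc]; module
  have hcq : ⟪r - q, c - q⟫ = 0 := by
    rw [show c - q = (1 - μ) • (z - q) by rw [hc]; module, real_inner_smul_right, hzq, mul_zero]
  have hsplit : z - q = (2 : ℝ) • (z - p) + (r - q) := by rw [hr]; module
  have hyc : ⟪z - c, y - c⟫ = 2 * μ * ⟪z - p, y - p⟫ := by
    have e₁ : ⟪z - p, y - c⟫ = ⟪z - p, y - p⟫ - ⟪c - p, z - p⟫ := by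
      rw [real_inner_comm (z - p) (c - p), ← inner_sub_right, sub_sub_sub_cancel_right]
    have e₂ : ⟪r - q, y - c⟫ = ⟪r - q, y - q⟫ - ⟪r - q, c - q⟫ := by
      rw [← inner_sub_right, sub_sub_sub_cancel_right]
    rw [hzc, hsplit, real_inner_smul_left, inner_add_left, real_inner_smul_left, e₁, e₂, hcp,
      hyq, hcq]
    ring
  have hμ : μ * ‖z - q‖ ^ 2 = 2 * ‖z - p‖ ^ 2 := by
    have e₁ : ⟪z - c, z - p⟫ = ‖z - p‖ ^ 2 := by
      rw [show z - c = (z - p) - (c - p) by abel, inner_sub_left, hcp,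
        real_inner_self_eq_norm_sq, sub_zero]
    have e₂ : ⟪z - q, (2 : ℝ) • (z - p)⟫ = ‖z - q‖ ^ 2 := by
      rw [show (2 : ℝ) • (z - p) = (z - q) - (r - q) by rw [hr]; module, inner_sub_right,
        real_inner_comm (r - q), hzq, real_inner_self_eq_norm_sq, sub_zero]
    rw [hzc, real_inner_smul_left] at e₁
    rw [real_inner_smul_right] at e₂
    linear_combination 2 * e₁ - μ * e₂
  rw [hyc]
  rcases le_or_gt 0 μ with hμ₀ | hμ₀
  · exact mul_nonpos_of_nonneg_of_nonpos (by positivity) hy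
  · have hzp : z - p = 0 := by
      rw [← norm_eq_zero, ← sq_eq_zero_iff]
      nlinarith [sq_nonneg ‖z - q‖, sq_nonneg ‖z - p‖]
    rw [hzp, inner_zero_left, mul_zero]

theorem circumcenteredReflection_step {S : Set E} {U : AffineSubspace ℝ E} (hS : Convex ℝ S)
    {z p r q r' c : E} (hz : z ∈ U) (hp : p ∈ S) (hpmin : ∀ w ∈ S, dist z p ≤ dist z w)
    (hr : r = (2 : ℝ) • p - z)
    (hq : q ∈ U) (hqmin : ∀ w ∈ U, dist r q ≤ dist r w) (hr' : r' = (2 : ℝ) • q - r)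
    (hc : c ∈ affineSpan ℝ {z, r, r'}) (hcr : dist c z = dist c r) (hcr' : dist c z = dist c r') :
    c ∈ U ∧ (∀ y ∈ S, y ∈ U → dist c y ^ 2 + dist c z ^ 2 ≤ dist z y ^ 2) ∧
      dist z p ≤ dist c z := by
  subst hr'
  have hcp : ⟪c - p, z - p⟫ = 0 := inner_sub_eq_zero_of_dist_eq_reflection (hr ▸ hcr)
  have hcq : ⟪c - q, r - q⟫ = 0 := inner_sub_eq_zero_of_dist_eq_reflection (hcr.symm.trans hcr')
  have hperp : ∀ w ∈ U, ⟪r - q, w - q⟫ = 0 := fun w hw =>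
    U.inner_sub_eq_zero_of_forall_dist_le hq hqmin hw
  obtain ⟨μ, hμ⟩ := exists_eq_add_smul_of_mem_affineSpan_reflection hc (hperp z hz) hcq
  refine ⟨?_, fun y hyS hyU => ?_, ?_⟩
  · rw [hμ, add_comm]
    exact U.smul_vsub_vadd_mem μ hq hz hz
  · have hobtuse := inner_sub_nonpos_of_eq_add_smul hr hμ hcp (hperp z hz) (hperp y hyU)
      (inner_sub_nonpos_of_forall_dist_le hS hp hpmin hyS)
    rw [dist_eq_norm, dist_eq_norm, dist_eq_norm, show z - y = (z - c) - (y - c) by abel,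
      norm_sub_sq_real (z - c), norm_sub_rev c y, norm_sub_rev c z]
    linarith
  · rw [dist_eq_norm, dist_eq_norm, norm_sub_rev c z]
    exact norm_sub_le_norm_sub_of_inner_eq_zero hcp

section FejerSequence

variable {X : Type*} [PseudoMetricSpace X] {x : ℕ → X}

theorem tendsto_dist_succ_of_sq_dist_add_sq_le {y : X}
    (h : ∀ k, dist (x (k + 1)) y ^ 2 + dist (x (k + 1)) (x k) ^ 2 ≤ dist (x k) y ^ 2) :
    Tendsto (fun k => dist (x (k + 1)) (x k)) atTop (𝓝 0) := by
  set a : ℕ → ℝ := fun k => dist (x k) y ^ 2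
  have ha : Antitone a := antitone_nat_of_succ_le fun k =>
    le_of_add_le_of_nonneg_left (h k) (sq_nonneg _)
  have hlim := tendsto_atTop_ciInf ha ⟨0, by rintro _ ⟨k, rfl⟩; positivity⟩
  have hdiff : Tendsto (fun k => a k - a (k + 1)) atTop (𝓝 0) := by
    simpa using hlim.sub ((tendsto_add_atTop_iff_nat 1).2 hlim)
  have hsq : Tendsto (fun k => dist (x (k + 1)) (x k) ^ 2) atTop (𝓝 0) :=
    squeeze_zero (fun k => sq_nonneg _) (fun k => by linarith [h k]) hdiff
  simpa using hsq.sqrt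

theorem exists_tendsto_of_forall_dist_succ_le [ProperSpace X] {M : Set X} (hM : M.Nonempty)
    (hfej : ∀ k, ∀ y ∈ M, dist (x (k + 1)) y ≤ dist (x k) y)
    (hcl : ∀ a (φ : ℕ → ℕ), StrictMono φ → Tendsto (x ∘ φ) atTop (𝓝 a) → a ∈ M) :
    ∃ a ∈ M, Tendsto x atTop (𝓝 a) := by
  obtain ⟨y, hy⟩ := hM
  have hanti : ∀ y ∈ M, Antitone fun k => dist (x k) y := fun y hy =>
    antitone_nat_of_succ_le fun k => hfej k y hy
  obtain ⟨a, -, φ, hφ, hxa⟩ := tendsto_subseq_of_bounded Metric.isBounded_closedBall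
    fun k => Metric.mem_closedBall.2 (hanti y hy (Nat.zero_le k))
  have ha := hcl a φ hφ hxa
  refine ⟨a, ha, ?_⟩
  rw [tendsto_iff_dist_tendsto_zero] at hxa ⊢
  exact (tendsto_iff_tendsto_subseq_of_antitone (hanti a ha) hφ.tendsto_atTop).2 hxa

end FejerSequence

def LinearMap.fiberAffineSubspace {k V W : Type*} [Ring k] [AddCommGroup V] [Module k V]
    [AddCommGroup W] [Module k W] (Q : V →ₗ[k] W) (b : W) : AffineSubspace k V where
  carrier := {x | Q x = b}
  smul_vsub_vadd_mem' c p₁ p₂ p₃ h₁ h₂ h₃ := by simp_all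

theorem stmt_10_general {n : ℕ} (K U : Set (EuclideanSpace ℝ (Fin n)))
    (hU : ∃ (Q : EuclideanSpace ℝ (Fin n) →ₗ[ℝ] EuclideanSpace ℝ (Fin n))
      (b : EuclideanSpace ℝ (Fin n)), U = {x | Q x = b})
    (hKU : (K ∩ U).Nonempty)
    (S : EuclideanSpace ℝ (Fin n) → Set (EuclideanSpace ℝ (Fin n)))
    (hA1 : ∀ x, IsClosed (S x) ∧ Convex ℝ (S x))
    (hA2 : ∀ x, K ⊆ S x)
    (hA3 : ∀ (z : ℕ → EuclideanSpace ℝ (Fin n)) (zstar : EuclideanSpace ℝ (Fin n)),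
      Tendsto z atTop (𝓝 zstar) →
      Tendsto (fun k => Metric.infDist (z k) (S (z k))) atTop (𝓝 0) → zstar ∈ K)
    (PS PU : EuclideanSpace ℝ (Fin n) → EuclideanSpace ℝ (Fin n))
    (hPS : ∀ y, PS y ∈ S y ∧ ∀ w ∈ S y, dist y (PS y) ≤ dist y w)
    (hPU : ∀ y, PU y ∈ U ∧ ∀ w ∈ U, dist y (PU y) ≤ dist y w)
    (RS RU : EuclideanSpace ℝ (Fin n) → EuclideanSpace ℝ (Fin n))
    (hRS : ∀ y, RS y = (2 : ℝ) • PS y - y)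
    (hRU : ∀ y, RU y = (2 : ℝ) • PU y - y)
    (CS : EuclideanSpace ℝ (Fin n) → EuclideanSpace ℝ (Fin n))
    (hCS : ∀ x ∈ U,
      CS x ∈ affineSpan ℝ ({x, RS x, RU (RS x)} : Set (EuclideanSpace ℝ (Fin n))) ∧
      dist (CS x) x = dist (CS x) (RS x) ∧ dist (CS x) x = dist (CS x) (RU (RS x)))
    (x : ℕ → EuclideanSpace ℝ (Fin n))
    (hx0 : x 0 ∈ U)
    (hxk : ∀ k, x (k + 1) = CS (x k)) :
    (∀ k, x k ∈ U) ∧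
    (∀ k, ∀ y ∈ K ∩ U, dist (x (k + 1)) y ≤ dist (x k) y) ∧
    (∃ xstar ∈ K ∩ U, Tendsto x atTop (𝓝 xstar)) := by
  obtain ⟨Q, b, rfl⟩ := hU
  have step (z) (hz : Q z = b) :=
    circumcenteredReflection_step (U := Q.fiberAffineSubspace b) (hA1 z).2 hz
    (hPS z).1 (hPS z).2 (hRS z) (hPU _).1 (hPU _).2 (hRU _) (hCS z hz).1 (hCS z hz).2.1
    (hCS z hz).2.2
  have hxU (k) : Q (x k) = b := by
    induction k with
    | zero => exact hx0
    | succ k ih => rw [hxk]; exact (step _ ih).1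
  have hsq (k) (y) (hy : y ∈ K ∩ {x | Q x = b}) :
      dist (x (k + 1)) y ^ 2 + dist (x (k + 1)) (x k) ^ 2 ≤ dist (x k) y ^ 2 := by
    rw [hxk]; exact (step _ (hxU k)).2.1 y (hA2 _ hy.1) hy.2
  have hfej (k) (y) (hy : y ∈ K ∩ {x | Q x = b}) : dist (x (k + 1)) y ≤ dist (x k) y :=
    (pow_le_pow_iff_left₀ dist_nonneg dist_nonneg two_ne_zero).1
      (le_of_add_le_of_nonneg_left (hsq k y hy) (sq_nonneg _))
  obtain ⟨y₀, hy₀⟩ := hKU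
  have hstep := tendsto_dist_succ_of_sq_dist_add_sq_le (hsq · y₀ hy₀)
  refine ⟨hxU, hfej, exists_tendsto_of_forall_dist_succ_le ⟨y₀, hy₀⟩ hfej
    fun a φ hφ hxa => ⟨?_, ?_⟩⟩
  · refine hA3 _ a hxa (squeeze_zero (fun _ => Metric.infDist_nonneg) (fun j => ?_)
      (hstep.comp hφ.tendsto_atTop))
    have := (step _ (hxU (φ j))).2.2
    rw [← hxk] at this
    exact (Metric.infDist_le_dist_of_mem (hPS _).1).trans this
  · exact (AffineSubspace.closed_of_finiteDimensional (Q.fiberAffineSubspace b)).mem_of_tendsto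
      hxa (Eventually.of_forall fun j => hxU (φ j))

theorem stmt_10 {n : ℕ} (K U : Set (EuclideanSpace ℝ (Fin n)))
    (hKcl : IsClosed K) (hKcv : Convex ℝ K)
    (hU : ∃ (Q : EuclideanSpace ℝ (Fin n) →ₗ[ℝ] EuclideanSpace ℝ (Fin n))
      (b : EuclideanSpace ℝ (Fin n)), U = {x | Q x = b})
    (hKU : (K ∩ U).Nonempty)
    (S : EuclideanSpace ℝ (Fin n) → Set (EuclideanSpace ℝ (Fin n)))
    (hA1 : ∀ x, IsClosed (S x) ∧ Convex ℝ (S x))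
    (hA2 : ∀ x, K ⊆ S x)
    (hA3 : ∀ (z : ℕ → EuclideanSpace ℝ (Fin n)) (zstar : EuclideanSpace ℝ (Fin n)),
      Tendsto z atTop (𝓝 zstar) →
      Tendsto (fun k => Metric.infDist (z k) (S (z k))) atTop (𝓝 0) → zstar ∈ K)
    (PS PU : EuclideanSpace ℝ (Fin n) → EuclideanSpace ℝ (Fin n))
    (hPS : ∀ y, PS y ∈ S y ∧ ∀ w ∈ S y, dist y (PS y) ≤ dist y w)
    (hPU : ∀ y, PU y ∈ U ∧ ∀ w ∈ U, dist y (PU y) ≤ dist y w)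
    (RS RU : EuclideanSpace ℝ (Fin n) → EuclideanSpace ℝ (Fin n))
    (hRS : ∀ y, RS y = (2 : ℝ) • PS y - y)
    (hRU : ∀ y, RU y = (2 : ℝ) • PU y - y)
    (CS : EuclideanSpace ℝ (Fin n) → EuclideanSpace ℝ (Fin n))
    (hCS : ∀ x ∈ U,
      CS x ∈ affineSpan ℝ ({x, RS x, RU (RS x)} : Set (EuclideanSpace ℝ (Fin n))) ∧
      dist (CS x) x = dist (CS x) (RS x) ∧ dist (CS x) x = dist (CS x) (RU (RS x)))
    (x : ℕ → EuclideanSpace ℝ (Fin n))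
    (hx0 : x 0 ∈ U)
    (hxk : ∀ k, x (k + 1) = CS (x k)) :
    (∀ k, x k ∈ U) ∧
    (∀ k, ∀ y ∈ K ∩ U, dist (x (k + 1)) y ≤ dist (x k) y) ∧
    (∃ xstar ∈ K ∩ U, Tendsto x atTop (𝓝 xstar)) :=
  stmt_10_general K U hU hKU S hA1 hA2 hA3 PS PU hPS hPU RS RU hRS hRU CS hCS x hx0 hxk
end

section
/- Let K ⊆ ℝⁿ be closed convex, U an affine subspace with K ∩ U ≠ ∅, and S a separating operator for K. The MAAP sequence x^{k+1} = T^S(x^k) = P_U(P^S(x^k)), from any x⁰ ∈ ℝⁿ, is Fejér monotone with respect to K ∩ U and converges to a point of K ∩ U. -/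
open Filter Topology
open scoped RealInnerProductSpace

/-! Both `P^S(x)` and `P_U` are nearest-point maps onto convex sets containing `K ∩ U`, so the
obtuse-angle inequality for such projections gives, for every `y ∈ K ∩ U`,
`‖x_{k+1} - y‖² + ‖x_k - P^S(x_k)‖² ≤ ‖x_k - y‖²`. This is Fejér monotonicity, and telescoping it
makes the residuals `‖x_k - P^S(x_k)‖` tend to `0`. The bounded sequence has a cluster point, which
lies in `K` by (A3) and in the closed set `U`; Fejér monotonicity with respect to that point then
forces the whole sequence to converge to it. -/

section Projection

variable {E : Type*} [NormedAddCommGroup E] [InnerProductSpace ℝ E]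

lemma sq_dist_add_sq_dist_le_of_forall_dist_le {C : Set E} (hC : Convex ℝ C) {z v y : E}
    (hv : v ∈ C) (hmin : ∀ w ∈ C, dist z v ≤ dist z w) (hy : y ∈ C) :
    dist v y ^ 2 + dist z v ^ 2 ≤ dist z y ^ 2 := by
  have hinner : ⟪z - v, y - v⟫ ≤ 0 := by
    have : Nonempty C := ⟨⟨v, hv⟩⟩
    refine (norm_eq_iInf_iff_real_inner_le_zero hC hv).1 ?_ y hy
    refine le_antisymm (le_ciInf fun w => ?_) (ciInf_le ⟨0, ?_⟩ (⟨v, hv⟩ : C))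
    · simpa only [dist_eq_norm] using hmin w w.2
    · rintro r ⟨w, rfl⟩
      positivity
  have hsplit : z - y = (z - v) - (y - v) := by abel
  rw [dist_comm v y, dist_eq_norm, dist_eq_norm, dist_eq_norm, hsplit,
    norm_sub_sq_real (z - v)]
  linarith

lemma sq_dist_comp_projection_add_le {K U : Set E} {S : E → Set E} {PS PU : E → E}
    (hU : Convex ℝ U) (hS : ∀ z, Convex ℝ (S z)) (hKS : ∀ z, K ⊆ S z)
    (hPS : ∀ z, PS z ∈ S z ∧ ∀ w ∈ S z, dist z (PS z) ≤ dist z w)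
    (hPU : ∀ z, PU z ∈ U ∧ ∀ w ∈ U, dist z (PU z) ≤ dist z w) (z : E) {y : E}
    (hy : y ∈ K ∩ U) :
    dist (PU (PS z)) y ^ 2 + dist z (PS z) ^ 2 ≤ dist z y ^ 2 := by
  have hS' := sq_dist_add_sq_dist_le_of_forall_dist_le (hS z) (hPS z).1 (hPS z).2 (hKS z hy.1)
  have hU' := sq_dist_add_sq_dist_le_of_forall_dist_le hU (hPU (PS z)).1 (hPU (PS z)).2 hy.2
  nlinarith [sq_nonneg (dist (PS z) (PU (PS z)))]

end Projection

lemma tendsto_zero_of_le_sub_succ {a d : ℕ → ℝ} (ha : ∀ k, 0 ≤ a k) (hd : ∀ k, 0 ≤ d k)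
    (h : ∀ k, a k ≤ d k - d (k + 1)) : Tendsto a atTop (𝓝 0) := by
  refine (summable_of_sum_range_le (c := d 0) ha fun m => ?_).tendsto_atTop_zero
  calc ∑ k ∈ Finset.range m, a k ≤ ∑ k ∈ Finset.range m, (d k - d (k + 1)) :=
        Finset.sum_le_sum fun k _ => h k
    _ = d 0 - d m := Finset.sum_range_sub' d m
    _ ≤ d 0 := sub_le_self _ (hd m)

def FejerMonotone {α : Type*} [PseudoMetricSpace α] (x : ℕ → α) (F : Set α) : Prop :=
  ∀ k, ∀ y ∈ F, dist (x (k + 1)) y ≤ dist (x k) y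

namespace FejerMonotone

variable {α : Type*} [PseudoMetricSpace α] {x : ℕ → α} {F : Set α} {y : α}

lemma antitone_dist (h : FejerMonotone x F) (hy : y ∈ F) : Antitone fun k => dist (x k) y :=
  antitone_nat_of_succ_le fun k => h k y hy

lemma tendsto_of_subseq (h : FejerMonotone x F) (hy : y ∈ F) {φ : ℕ → ℕ}
    (hsub : Tendsto (x ∘ φ) atTop (𝓝 y)) : Tendsto x atTop (𝓝 y) := by
  rw [Metric.tendsto_atTop] at hsub ⊢
  intro ε hε
  obtain ⟨j, hj⟩ := hsub ε hε
  exact ⟨φ j, fun k hk => (h.antitone_dist hy hk).trans_lt (hj j le_rfl)⟩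

lemma exists_subseq_tendsto [ProperSpace α] (h : FejerMonotone x F) (hF : F.Nonempty) :
    ∃ a, ∃ φ : ℕ → ℕ, StrictMono φ ∧ Tendsto (x ∘ φ) atTop (𝓝 a) := by
  obtain ⟨y, hy⟩ := hF
  have hball : ∀ k, x k ∈ Metric.closedBall y (dist (x 0) y) := fun k =>
    h.antitone_dist hy (Nat.zero_le k)
  obtain ⟨a, -, φ, hφ, hlim⟩ := (isCompact_closedBall y _).tendsto_subseq hball
  exact ⟨a, φ, hφ, hlim⟩

end FejerMonotone

theorem stmt_11_general {n : ℕ} (K U : Set (EuclideanSpace ℝ (Fin n)))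
    (hU : ∃ (Q : EuclideanSpace ℝ (Fin n) →ₗ[ℝ] EuclideanSpace ℝ (Fin n))
      (b : EuclideanSpace ℝ (Fin n)), U = {x | Q x = b})
    (hKU : (K ∩ U).Nonempty)
    (S : EuclideanSpace ℝ (Fin n) → Set (EuclideanSpace ℝ (Fin n)))
    (hA1 : ∀ x, IsClosed (S x) ∧ Convex ℝ (S x))
    (hA2 : ∀ x, K ⊆ S x)
    (hA3 : ∀ (z : ℕ → EuclideanSpace ℝ (Fin n)) (zstar : EuclideanSpace ℝ (Fin n)),
      Tendsto z atTop (𝓝 zstar) →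
      Tendsto (fun k => Metric.infDist (z k) (S (z k))) atTop (𝓝 0) → zstar ∈ K)
    (PS PU : EuclideanSpace ℝ (Fin n) → EuclideanSpace ℝ (Fin n))
    (hPS : ∀ y, PS y ∈ S y ∧ ∀ w ∈ S y, dist y (PS y) ≤ dist y w)
    (hPU : ∀ y, PU y ∈ U ∧ ∀ w ∈ U, dist y (PU y) ≤ dist y w)
    (x : ℕ → EuclideanSpace ℝ (Fin n))
    (hxk : ∀ k, x (k + 1) = PU (PS (x k))) :
    (∀ k, ∀ y ∈ K ∩ U, dist (x (k + 1)) y ≤ dist (x k) y) ∧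
    (∃ xstar ∈ K ∩ U, Tendsto x atTop (𝓝 xstar)) := by
  obtain ⟨Q, b, rfl⟩ := hU
  have hstep : ∀ k, ∀ y ∈ K ∩ {x | Q x = b},
      dist (x (k + 1)) y ^ 2 + dist (x k) (PS (x k)) ^ 2 ≤ dist (x k) y ^ 2 := fun k y hy =>
    hxk k ▸ sq_dist_comp_projection_add_le (convex_singleton b |>.linear_preimage Q)
      (fun z => (hA1 z).2) hA2 hPS hPU (x k) hy
  have hfejer : FejerMonotone x (K ∩ {x | Q x = b}) := fun k y hy =>
    pow_le_pow_iff_left₀ dist_nonneg dist_nonneg two_ne_zero |>.1 <|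
      le_of_add_le_of_nonneg_left (hstep k y hy) (sq_nonneg _)
  have hres : Tendsto (fun k => Metric.infDist (x k) (S (x k))) atTop (𝓝 0) := by
    obtain ⟨y, hy⟩ := hKU
    have hsq := tendsto_zero_of_le_sub_succ (a := fun k => dist (x k) (PS (x k)) ^ 2)
      (d := fun k => dist (x k) y ^ 2) (fun k => sq_nonneg _) (fun k => sq_nonneg _)
      fun k => le_sub_iff_add_le'.2 (hstep k y hy)
    have hdist : Tendsto (fun k => dist (x k) (PS (x k))) atTop (𝓝 0) := by
      simpa only [Real.sqrt_sq dist_nonneg, Real.sqrt_zero] using hsq.sqrt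
    exact squeeze_zero (fun k => Metric.infDist_nonneg)
      (fun k => Metric.infDist_le_dist_of_mem (hPS (x k)).1) hdist
  obtain ⟨a, φ, hφ, hsub⟩ := hfejer.exists_subseq_tendsto hKU
  have haK : a ∈ K := hA3 _ a hsub (hres.comp hφ.tendsto_atTop)
  have haU : a ∈ {x | Q x = b} := by
    have hxU : ∀ᶠ k in atTop, x k ∈ {x | Q x = b} := eventually_atTop.2 ⟨1, fun k hk => by
      obtain ⟨m, rfl⟩ := Nat.exists_eq_add_of_le' hk
      exact hxk m ▸ (hPU _).1⟩
    exact (isClosed_singleton.preimage Q.continuous_of_finiteDimensional).mem_of_tendsto hsub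
      (hφ.tendsto_atTop.eventually hxU)
  exact ⟨hfejer, a, ⟨haK, haU⟩, hfejer.tendsto_of_subseq ⟨haK, haU⟩ hsub⟩

theorem stmt_11 {n : ℕ} (K U : Set (EuclideanSpace ℝ (Fin n)))
    (hKcl : IsClosed K) (hKcv : Convex ℝ K)
    (hU : ∃ (Q : EuclideanSpace ℝ (Fin n) →ₗ[ℝ] EuclideanSpace ℝ (Fin n))
      (b : EuclideanSpace ℝ (Fin n)), U = {x | Q x = b})
    (hKU : (K ∩ U).Nonempty)
    (S : EuclideanSpace ℝ (Fin n) → Set (EuclideanSpace ℝ (Fin n)))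
    (hA1 : ∀ x, IsClosed (S x) ∧ Convex ℝ (S x))
    (hA2 : ∀ x, K ⊆ S x)
    (hA3 : ∀ (z : ℕ → EuclideanSpace ℝ (Fin n)) (zstar : EuclideanSpace ℝ (Fin n)),
      Tendsto z atTop (𝓝 zstar) →
      Tendsto (fun k => Metric.infDist (z k) (S (z k))) atTop (𝓝 0) → zstar ∈ K)
    (PS PU : EuclideanSpace ℝ (Fin n) → EuclideanSpace ℝ (Fin n))
    (hPS : ∀ y, PS y ∈ S y ∧ ∀ w ∈ S y, dist y (PS y) ≤ dist y w)
    (hPU : ∀ y, PU y ∈ U ∧ ∀ w ∈ U, dist y (PU y) ≤ dist y w)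
    (x : ℕ → EuclideanSpace ℝ (Fin n))
    (hxk : ∀ k, x (k + 1) = PU (PS (x k))) :
    (∀ k, ∀ y ∈ K ∩ U, dist (x (k + 1)) y ≤ dist (x k) y) ∧
    (∃ xstar ∈ K ∩ U, Tendsto x atTop (𝓝 xstar)) :=
  stmt_11_general K U hU hKU S hA1 hA2 hA3 PS PU hPS hPU x hxk
end

section
/- Let M ⊆ ℝⁿ be nonempty closed convex, and {yₖ} a sequence Fejér monotone with respect to M such that dist(yₖ, M) → 0 R-linearly. Then {yₖ} converges R-linearly to some y* ∈ M, with asymptotic constant at most that of {dist(yₖ, M)}. -/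
open Filter Topology

/-!
Write `d k` for the distance from `y k` to `M`. Fejér monotonicity makes every `y m` with `m ≥ k`
at least as close as `y k` to each point of `M`, so `dist (y m) (y k) ≤ 2 * d k`. Since `d k → 0`,
the sequence is Cauchy; its limit `y*` lies in the closed set `M` and satisfies
`‖y k - y*‖ ≤ 2 * d k`. The factor `2` disappears under `k`-th roots, which gives the bound on the
R-linear rate.
-/

section Fejer

variable {X : Type*} [PseudoMetricSpace X] {M : Set X} {y : ℕ → X}

theorem dist_le_of_fejer (hfejer : ∀ k, ∀ z ∈ M, dist (y (k + 1)) z ≤ dist (y k) z)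
    {z : X} (hz : z ∈ M) {k m : ℕ} (hkm : k ≤ m) : dist (y m) z ≤ dist (y k) z :=
  antitone_nat_of_succ_le (f := fun k => dist (y k) z) (fun k => hfejer k z hz) hkm

theorem antitone_infDist_of_fejer (hM : M.Nonempty)
    (hfejer : ∀ k, ∀ z ∈ M, dist (y (k + 1)) z ≤ dist (y k) z) :
    Antitone fun k => Metric.infDist (y k) M :=
  antitone_nat_of_succ_le fun k => (Metric.le_infDist hM).2 fun _ hz =>
    (Metric.infDist_le_dist_of_mem hz).trans (hfejer k _ hz)

theorem dist_le_two_mul_infDist_of_fejer (hM : M.Nonempty)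
    (hfejer : ∀ k, ∀ z ∈ M, dist (y (k + 1)) z ≤ dist (y k) z) {k m : ℕ} (hkm : k ≤ m) :
    dist (y m) (y k) ≤ 2 * Metric.infDist (y k) M := by
  rw [← div_le_iff₀' two_pos, Metric.le_infDist hM]
  intro z hz
  have := dist_le_of_fejer hfejer hz hkm
  have := dist_triangle_right (y m) (y k) z
  linarith

theorem cauchySeq_of_fejer (hM : M.Nonempty)
    (hfejer : ∀ k, ∀ z ∈ M, dist (y (k + 1)) z ≤ dist (y k) z)
    (hd : Tendsto (fun k => Metric.infDist (y k) M) atTop (𝓝 0)) : CauchySeq y := by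
  refine cauchySeq_of_le_tendsto_0 (fun N => 4 * Metric.infDist (y N) M) (fun m l N hm hl => ?_)
    (by simpa using hd.const_mul 4)
  have hm' := dist_le_two_mul_infDist_of_fejer hM hfejer hm
  have hl' := dist_le_two_mul_infDist_of_fejer hM hfejer hl
  have := dist_triangle_right (y m) (y l) (y N)
  linarith

theorem dist_le_two_mul_infDist_of_fejer_of_tendsto (hM : M.Nonempty)
    (hfejer : ∀ k, ∀ z ∈ M, dist (y (k + 1)) z ≤ dist (y k) z) {x : X}
    (hy : Tendsto y atTop (𝓝 x)) (k : ℕ) : dist x (y k) ≤ 2 * Metric.infDist (y k) M :=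
  le_of_tendsto (hy.dist tendsto_const_nhds) <|
    eventually_atTop.2 ⟨k, fun _ hm => dist_le_two_mul_infDist_of_fejer hM hfejer hm⟩

end Fejer

section RootLimsup

variable {a b : ℕ → ℝ}

theorem isBoundedUnder_rpow_inv_natCast (ha : ∀ k, 0 ≤ a k) {B : ℝ} (hB : ∀ k, a k ≤ B) :
    IsBoundedUnder (· ≤ ·) atTop fun k : ℕ => a k ^ (k : ℝ)⁻¹ := by
  refine isBoundedUnder_of ⟨max B 1, fun k => ?_⟩
  rcases Nat.eq_zero_or_pos k with rfl | hk
  · simp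
  calc a k ^ (k : ℝ)⁻¹ ≤ max B 1 ^ (k : ℝ)⁻¹ :=
        Real.rpow_le_rpow (ha k) ((hB k).trans (le_max_left _ _)) (by positivity)
    _ ≤ max B 1 ^ (1 : ℝ) :=
        Real.rpow_le_rpow_of_exponent_le (le_max_right _ _) (inv_le_one_of_one_le₀ (by simpa))
    _ = max B 1 := Real.rpow_one _

theorem limsup_rpow_inv_natCast_nonneg (ha : ∀ k, 0 ≤ a k)
    (hbdd : IsBoundedUnder (· ≤ ·) atTop fun k : ℕ => a k ^ (k : ℝ)⁻¹) :
    0 ≤ limsup (fun k : ℕ => a k ^ (k : ℝ)⁻¹) atTop :=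
  le_limsup_of_frequently_le (Frequently.of_forall fun k => Real.rpow_nonneg (ha k) _) hbdd

theorem eventually_le_pow_of_limsup_rpow_inv_natCast_lt (ha : ∀ k, 0 ≤ a k)
    (hbdd : IsBoundedUnder (· ≤ ·) atTop fun k : ℕ => a k ^ (k : ℝ)⁻¹) {ρ : ℝ}
    (hρ : limsup (fun k : ℕ => a k ^ (k : ℝ)⁻¹) atTop < ρ) : ∀ᶠ k in atTop, a k ≤ ρ ^ k := by
  filter_upwards [eventually_lt_of_limsup_lt hρ hbdd, eventually_ne_atTop 0] with k hk hk0
  calc a k = (a k ^ (k : ℝ)⁻¹) ^ k := (Real.rpow_inv_natCast_pow (ha k) hk0).symm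
    _ ≤ ρ ^ k := pow_le_pow_left₀ (Real.rpow_nonneg (ha k) _) hk.le k

theorem tendsto_zero_of_limsup_rpow_inv_natCast_lt_one (ha : ∀ k, 0 ≤ a k)
    (hbdd : IsBoundedUnder (· ≤ ·) atTop fun k : ℕ => a k ^ (k : ℝ)⁻¹)
    (h1 : limsup (fun k : ℕ => a k ^ (k : ℝ)⁻¹) atTop < 1) : Tendsto a atTop (𝓝 0) := by
  obtain ⟨ρ, hrρ, hρ1⟩ := exists_between h1
  have hρ0 : 0 ≤ ρ := (limsup_rpow_inv_natCast_nonneg ha hbdd).trans hrρ.le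
  exact squeeze_zero' (Eventually.of_forall ha)
    (eventually_le_pow_of_limsup_rpow_inv_natCast_lt ha hbdd hrρ)
    (tendsto_pow_atTop_nhds_zero_of_lt_one hρ0 hρ1)

theorem tendsto_rpow_inv_natCast_of_pos {c : ℝ} (hc : 0 < c) :
    Tendsto (fun k : ℕ => c ^ (k : ℝ)⁻¹) atTop (𝓝 1) := by
  have := (Real.continuousAt_const_rpow (a := c) (b := 0) hc.ne').tendsto.comp
    (tendsto_inv_atTop_zero.comp tendsto_natCast_atTop_atTop)
  simpa [Function.comp_def] using this

theorem limsup_rpow_inv_natCast_le_of_le_const_mul (ha : ∀ k, 0 ≤ a k)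
    (hbdd : IsBoundedUnder (· ≤ ·) atTop fun k : ℕ => a k ^ (k : ℝ)⁻¹)
    (hb : ∀ k, 0 ≤ b k) {c : ℝ} (hc : 0 < c) (hba : ∀ k, b k ≤ c * a k) :
    limsup (fun k : ℕ => b k ^ (k : ℝ)⁻¹) atTop ≤
      limsup (fun k : ℕ => a k ^ (k : ℝ)⁻¹) atTop := by
  refine le_of_forall_gt_imp_ge_of_dense fun ρ hρ => ?_
  have hρ0 : 0 ≤ ρ := (limsup_rpow_inv_natCast_nonneg ha hbdd).trans hρ.le
  have hlim : Tendsto (fun k : ℕ => c ^ (k : ℝ)⁻¹ * ρ) atTop (𝓝 ρ) := by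
    simpa using (tendsto_rpow_inv_natCast_of_pos hc).mul_const ρ
  have hle : ∀ᶠ k : ℕ in atTop, b k ^ (k : ℝ)⁻¹ ≤ c ^ (k : ℝ)⁻¹ * ρ := by
    filter_upwards [eventually_le_pow_of_limsup_rpow_inv_natCast_lt ha hbdd hρ,
      eventually_ne_atTop 0] with k hk hk0
    calc b k ^ (k : ℝ)⁻¹ ≤ (c * ρ ^ k) ^ (k : ℝ)⁻¹ :=
          Real.rpow_le_rpow (hb k) ((hba k).trans (by gcongr)) (by positivity)
      _ = c ^ (k : ℝ)⁻¹ * ρ := by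
          rw [Real.mul_rpow hc.le (by positivity), Real.pow_rpow_inv_natCast hρ0 hk0]
  calc limsup (fun k : ℕ => b k ^ (k : ℝ)⁻¹) atTop
      ≤ limsup (fun k : ℕ => c ^ (k : ℝ)⁻¹ * ρ) atTop :=
        limsup_le_limsup hle
          (isCoboundedUnder_le_of_le atTop fun k => Real.rpow_nonneg (hb k) _)
          hlim.isBoundedUnder_le
    _ = ρ := hlim.limsup_eq

end RootLimsup

theorem stmt_12_general {n : ℕ} (M : Set (EuclideanSpace ℝ (Fin n)))
    (hMne : M.Nonempty) (hMcl : IsClosed M)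
    (y : ℕ → EuclideanSpace ℝ (Fin n))
    (hfejer : ∀ k, ∀ z ∈ M, dist (y (k + 1)) z ≤ dist (y k) z)
    (hRlin : limsup (fun k => Metric.infDist (y k) M ^ ((k : ℝ)⁻¹)) atTop < 1) :
    ∃ ystar ∈ M, Tendsto y atTop (𝓝 ystar) ∧
      limsup (fun k => ‖y k - ystar‖ ^ ((k : ℝ)⁻¹)) atTop ≤
        limsup (fun k => Metric.infDist (y k) M ^ ((k : ℝ)⁻¹)) atTop := by
  set d := fun k => Metric.infDist (y k) M
  have hd0 : ∀ k, 0 ≤ d k := fun k => Metric.infDist_nonneg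
  have hbdd := isBoundedUnder_rpow_inv_natCast hd0
    fun k => antitone_infDist_of_fejer hMne hfejer (Nat.zero_le k)
  have hd := tendsto_zero_of_limsup_rpow_inv_natCast_lt_one hd0 hbdd hRlin
  obtain ⟨ystar, hy⟩ := cauchySeq_tendsto_of_complete (cauchySeq_of_fejer hMne hfejer hd)
  have hmem : ystar ∈ M := by
    rw [hMcl.mem_iff_infDist_zero hMne]
    exact tendsto_nhds_unique ((Metric.continuous_infDist_pt M).tendsto ystar |>.comp hy) hd
  refine ⟨ystar, hmem, hy, limsup_rpow_inv_natCast_le_of_le_const_mul hd0 hbdd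
    (fun _ => norm_nonneg _) two_pos fun k => ?_⟩
  rw [← dist_eq_norm, dist_comm]
  exact dist_le_two_mul_infDist_of_fejer_of_tendsto hMne hfejer hy k

theorem stmt_12 {n : ℕ} (M : Set (EuclideanSpace ℝ (Fin n)))
    (hMne : M.Nonempty) (hMcl : IsClosed M) (hMcv : Convex ℝ M)
    (y : ℕ → EuclideanSpace ℝ (Fin n))
    (hfejer : ∀ k, ∀ z ∈ M, dist (y (k + 1)) z ≤ dist (y k) z)
    (hRlin : limsup (fun k => Metric.infDist (y k) M ^ ((k : ℝ)⁻¹)) atTop < 1) :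
    ∃ ystar ∈ M, Tendsto y atTop (𝓝 ystar) ∧
      limsup (fun k => ‖y k - ystar‖ ^ ((k : ℝ)⁻¹)) atTop ≤
        limsup (fun k => Metric.infDist (y k) M ^ ((k : ℝ)⁻¹)) atTop :=
  stmt_12_general M hMne hMcl y hfejer hRlin
end

section
/- Suppose K, U, S satisfy the local error bound LEB: there are V ⊆ ℝⁿ and ω > 0 with dist(x, S(x)) ≥ ω · dist(x, K ∩ U) for all x ∈ U ∩ V. Then for all x ∈ U ∩ V, (1 − ω²)·dist(x, K ∩ U)² ≥ dist(T^S(x), K ∩ U)². -/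
/-!
For `z ∈ K ∩ U`, the point `z` lies in the convex sets `S x` and `U`, so the obtuse-angle
characterisation of nearest points gives the Pythagorean-type inequalities
`dist x p² + dist p z² ≤ dist x z²` for `p = P^S x` and `dist p q² + dist q z² ≤ dist p z²` for
`q = P_U p`. Hence `dist q z² + dist x p² ≤ dist x z²`; taking the infimum over `z` gives
`dist(q, K ∩ U)² ≤ dist(x, K ∩ U)² - dist x p²`, and the error bound
`dist x p ≥ dist(x, S x) ≥ ω · dist(x, K ∩ U)` finishes the proof.
-/

open Filter Topology
open scoped RealInnerProductSpace

section NearestPoint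

variable {E : Type*} [NormedAddCommGroup E] [InnerProductSpace ℝ E]

theorem real_inner_sub_sub_nonpos_of_forall_dist_le {s : Set E} (hs : Convex ℝ s) {x p : E}
    (hp : p ∈ s) (hmin : ∀ w ∈ s, dist x p ≤ dist x w) : ∀ w ∈ s, ⟪x - p, w - p⟫ ≤ 0 := by
  rw [← norm_eq_iInf_iff_real_inner_le_zero hs hp]
  have : Nonempty s := ⟨⟨p, hp⟩⟩
  have hbdd : BddBelow (Set.range fun w : s => ‖x - w‖) := ⟨0, by
    rintro _ ⟨w, rfl⟩
    exact norm_nonneg _⟩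
  refine le_antisymm (le_ciInf fun w => ?_) (ciInf_le hbdd ⟨p, hp⟩)
  simpa only [dist_eq_norm] using hmin w w.2

theorem sq_dist_add_sq_dist_le_of_forall_dist_le_s13 {s : Set E} (hs : Convex ℝ s) {x p z : E}
    (hp : p ∈ s) (hmin : ∀ w ∈ s, dist x p ≤ dist x w) (hz : z ∈ s) :
    dist x p ^ 2 + dist p z ^ 2 ≤ dist x z ^ 2 := by
  have hobtuse := real_inner_sub_sub_nonpos_of_forall_dist_le hs hp hmin z hz
  have hsplit : x - z = (x - p) - (z - p) := by abel
  rw [dist_eq_norm x z, hsplit, norm_sub_sq_real, dist_comm p z, dist_eq_norm, dist_eq_norm]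
  linarith

end NearestPoint

theorem Metric.sq_infDist_add_le_of_forall {α : Type*} [PseudoMetricSpace α] {s : Set α}
    (hs : s.Nonempty) {x y : α} {c : ℝ} (hc : 0 ≤ c)
    (h : ∀ z ∈ s, dist y z ^ 2 + c ≤ dist x z ^ 2) :
    Metric.infDist y s ^ 2 + c ≤ Metric.infDist x s ^ 2 := by
  have hroot : √(Metric.infDist y s ^ 2 + c) ≤ Metric.infDist x s := by
    refine (Metric.le_infDist hs).2 fun z hz => Real.sqrt_le_iff.2 ⟨dist_nonneg, ?_⟩
    exact (add_le_add_left (pow_le_pow_left₀ Metric.infDist_nonneg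
      (Metric.infDist_le_dist_of_mem hz) 2) c).trans (h z hz)
  calc Metric.infDist y s ^ 2 + c = √(Metric.infDist y s ^ 2 + c) ^ 2 :=
        (Real.sq_sqrt (by positivity)).symm
    _ ≤ Metric.infDist x s ^ 2 := pow_le_pow_left₀ (Real.sqrt_nonneg _) hroot 2

theorem stmt_13_general {n : ℕ} (K U : Set (EuclideanSpace ℝ (Fin n)))
    (hU : ∃ (Q : EuclideanSpace ℝ (Fin n) →ₗ[ℝ] EuclideanSpace ℝ (Fin n))
      (b : EuclideanSpace ℝ (Fin n)), U = {x | Q x = b})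
    (S : EuclideanSpace ℝ (Fin n) → Set (EuclideanSpace ℝ (Fin n)))
    (hA1 : ∀ x, IsClosed (S x) ∧ Convex ℝ (S x))
    (hA2 : ∀ x, K ⊆ S x)
    (PS PU : EuclideanSpace ℝ (Fin n) → EuclideanSpace ℝ (Fin n))
    (hPS : ∀ y, PS y ∈ S y ∧ ∀ w ∈ S y, dist y (PS y) ≤ dist y w)
    (hPU : ∀ y, PU y ∈ U ∧ ∀ w ∈ U, dist y (PU y) ≤ dist y w)
    (V : Set (EuclideanSpace ℝ (Fin n))) (ω : ℝ) (hω : 0 < ω)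
    (hLEB : ∀ x ∈ U ∩ V, Metric.infDist x (S x) ≥ ω * Metric.infDist x (K ∩ U)) :
    ∀ x ∈ U ∩ V,
      (1 - ω ^ 2) * Metric.infDist x (K ∩ U) ^ 2 ≥
        Metric.infDist (PU (PS x)) (K ∩ U) ^ 2 := by
  intro x hx
  rcases (K ∩ U).eq_empty_or_nonempty with hKU | hKU
  · simp [hKU]
  obtain ⟨Q, b, rfl⟩ := hU
  have hUcv : Convex ℝ {x | Q x = b} := (convex_singleton b).linear_preimage Q
  have hdecrease : ∀ z ∈ K ∩ {x | Q x = b},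
      dist (PU (PS x)) z ^ 2 + dist x (PS x) ^ 2 ≤ dist x z ^ 2 := fun z hz => by
    have hS := sq_dist_add_sq_dist_le_of_forall_dist_le_s13 (hA1 x).2 (hPS x).1 (hPS x).2
      (hA2 x hz.1)
    have hU := sq_dist_add_sq_dist_le_of_forall_dist_le_s13 hUcv (hPU (PS x)).1 (hPU (PS x)).2 hz.2
    linarith [sq_nonneg (dist (PS x) (PU (PS x)))]
  have hinf := Metric.sq_infDist_add_le_of_forall hKU (sq_nonneg _) hdecrease
  have hbound : ω * Metric.infDist x (K ∩ {x | Q x = b}) ≤ dist x (PS x) :=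
    (hLEB x hx).trans (Metric.infDist_le_dist_of_mem (hPS x).1)
  have hsq := pow_le_pow_left₀ (mul_nonneg hω.le Metric.infDist_nonneg) hbound 2
  nlinarith

theorem stmt_13 {n : ℕ} (K U : Set (EuclideanSpace ℝ (Fin n)))
    (hKcl : IsClosed K) (hKcv : Convex ℝ K)
    (hU : ∃ (Q : EuclideanSpace ℝ (Fin n) →ₗ[ℝ] EuclideanSpace ℝ (Fin n))
      (b : EuclideanSpace ℝ (Fin n)), U = {x | Q x = b})
    (hKU : (K ∩ U).Nonempty)
    (S : EuclideanSpace ℝ (Fin n) → Set (EuclideanSpace ℝ (Fin n)))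
    (hA1 : ∀ x, IsClosed (S x) ∧ Convex ℝ (S x))
    (hA2 : ∀ x, K ⊆ S x)
    (hA3 : ∀ (z : ℕ → EuclideanSpace ℝ (Fin n)) (zstar : EuclideanSpace ℝ (Fin n)),
      Tendsto z atTop (𝓝 zstar) →
      Tendsto (fun k => Metric.infDist (z k) (S (z k))) atTop (𝓝 0) → zstar ∈ K)
    (PS PU : EuclideanSpace ℝ (Fin n) → EuclideanSpace ℝ (Fin n))
    (hPS : ∀ y, PS y ∈ S y ∧ ∀ w ∈ S y, dist y (PS y) ≤ dist y w)
    (hPU : ∀ y, PU y ∈ U ∧ ∀ w ∈ U, dist y (PU y) ≤ dist y w)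
    (V : Set (EuclideanSpace ℝ (Fin n))) (ω : ℝ) (hω : 0 < ω)
    (hLEB : ∀ x ∈ U ∩ V, Metric.infDist x (S x) ≥ ω * Metric.infDist x (K ∩ U)) :
    ∀ x ∈ U ∩ V,
      (1 - ω ^ 2) * Metric.infDist x (K ∩ U) ^ 2 ≥
        Metric.infDist (PU (PS x)) (K ∩ U) ^ 2 :=
  stmt_13_general K U hU S hA1 hA2 PS PU hPS hPU V ω hω hLEB
end

section
/- Let K be closed convex, U an affine subspace with K ∩ U ≠ ∅, S a separating operator for K, C^S the circumcenter operator and T^S = P_U ∘ P^S. Then for every x ∈ U, T^S(x) lies on the segment between x and C^S(x); more precisely C^S(x) = x + η(T^S(x) − x) for some η ≥ 1. -/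
open Filter Topology
open scoped RealInnerProductSpace

/-!
Since `U` is affine, the nearest-point map `P_U` is affine and `y - P_U y` is orthogonal to the
direction of `U`. With `p = P^S x - x` and `t = T^S x - x` the three points are `x`, `x + 2p` and
`x + (4t - 2p)`, and `p - t ⊥ t`. Equidistance gives `⟪c, p⟫ = ⟪c, t⟫ = ‖p‖²` for
`c = C^S x - x`, so `c ⊥ p - t`; as `c ∈ span {p, t}` this forces `c ∈ ℝ t`, and
`‖t‖ ≤ ‖p‖` makes the coefficient at least `1`.
-/

section

variable {E : Type*} [NormedAddCommGroup E] [InnerProductSpace ℝ E]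

def IsNearestPointMap (s : Set E) (P : E → E) : Prop :=
  ∀ y, P y ∈ s ∧ ∀ w ∈ s, dist y (P y) ≤ dist y w

namespace IsNearestPointMap

variable {U : AffineSubspace ℝ E} {P : E → E}

theorem inner_sub_apply_eq_zero (hP : IsNearestPointMap U P) (y : E) {v : E}
    (hv : v ∈ U.direction) : ⟪y - P y, v⟫ = 0 := by
  have hmin : ∀ w ∈ U.direction, ‖y - P y - 0‖ ≤ ‖y - P y - w‖ := fun w hw => by
    simpa [dist_eq_norm, sub_sub, add_comm] using
      (hP y).2 (w +ᵥ P y) (AffineSubspace.vadd_mem_of_mem_direction hw (hP y).1)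
  have hinf : ‖y - P y - 0‖ = ⨅ w : (U.direction : Set E), ‖y - P y - w‖ :=
    le_antisymm (le_ciInf fun w => hmin w w.2)
      (ciInf_le ⟨0, Set.forall_mem_range.2 fun _ => norm_nonneg _⟩
        (⟨0, U.direction.zero_mem⟩ : (U.direction : Set E)))
  simpa using (U.direction.norm_eq_iInf_iff_real_inner_eq_zero U.direction.zero_mem).1 hinf v hv

theorem eq_of_inner_eq_zero (hP : IsNearestPointMap U P) {y q : E} (hq : q ∈ U)
    (h : ∀ v ∈ U.direction, ⟪y - q, v⟫ = 0) : P y = q := by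
  have horth : ⟪y - q, q - P y⟫ = 0 := h _ (AffineSubspace.vsub_mem_direction hq (hP y).1)
  have hpyth := norm_add_sq_eq_norm_sq_add_norm_sq_real horth
  have hle : ‖y - P y‖ ≤ ‖y - q‖ := by simpa [dist_eq_norm] using (hP y).2 q hq
  rw [sub_add_sub_cancel] at hpyth
  have : ‖q - P y‖ = 0 := by
    nlinarith [norm_nonneg (q - P y), mul_self_le_mul_self (norm_nonneg _) hle]
  exact (sub_eq_zero.1 (norm_eq_zero.1 this)).symm

theorem apply_lineMap (hP : IsNearestPointMap U P) {x : E} (hx : x ∈ U) (y : E) (s : ℝ) :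
    P (AffineMap.lineMap x y s) = AffineMap.lineMap x (P y) s := by
  refine hP.eq_of_inner_eq_zero (AffineMap.lineMap_mem s hx (hP y).1) fun v hv => ?_
  have : AffineMap.lineMap x y s - AffineMap.lineMap x (P y) s = s • (y - P y) := by
    simp only [AffineMap.lineMap_apply_module']
    module
  rw [this, real_inner_smul_left, hP.inner_sub_apply_eq_zero y hv, mul_zero]

end IsNearestPointMap

theorem two_inner_sub_eq_norm_sq_of_dist_eq {c x y : E} (h : dist c x = dist c y) :
    2 * ⟪c - x, y - x⟫ = ‖y - x‖ ^ 2 := by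
  have hsq : ‖c - x‖ ^ 2 = ‖(c - x) - (y - x)‖ ^ 2 := by
    rw [sub_sub_sub_cancel_right, ← dist_eq_norm, ← dist_eq_norm, h]
  rw [norm_sub_sq_real (c - x) (y - x)] at hsq
  linarith

theorem exists_sub_eq_of_mem_affineSpan_triple {x y z c : E}
    (h : c ∈ affineSpan ℝ {x, y, z}) : ∃ a b : ℝ, c - x = a • (y - x) + b • (z - x) := by
  have hdir := AffineSubspace.vsub_mem_direction h (mem_affineSpan ℝ (Set.mem_insert x _))
  rw [direction_affineSpan, vectorSpan_eq_span_vsub_set_right ℝ (Set.mem_insert x _)] at hdir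
  simp only [Set.image_insert_eq, Set.image_singleton, vsub_eq_sub, sub_self] at hdir
  rw [Submodule.span_insert_zero, Submodule.mem_span_pair] at hdir
  obtain ⟨a, b, hab⟩ := hdir
  exact ⟨a, b, hab.symm⟩

theorem exists_one_le_smul_of_inner_eq_norm_sq {p t c : E} {a b : ℝ} (hpt : ⟪p - t, t⟫ = 0)
    (hc : c = a • p + b • t) (hcp : ⟪c, p⟫ = ‖p‖ ^ 2) (hct : ⟪c, t⟫ = ‖p‖ ^ 2) :
    ∃ η : ℝ, 1 ≤ η ∧ c = η • t := by
  have hcpt : ⟪c, p - t⟫ = 0 := by rw [inner_sub_right, hcp, hct, sub_self]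
  have ha : a * ‖p - t‖ ^ 2 = 0 := by
    have htp : ⟪t, p - t⟫ = 0 := by rw [real_inner_comm]; exact hpt
    have hp : p = (p - t) + t := (sub_add_cancel p t).symm
    rw [hc, inner_add_left, real_inner_smul_left, real_inner_smul_left, hp, inner_add_left,
      ← hp, htp, real_inner_self_eq_norm_sq] at hcpt
    linarith
  have hc' : c = (a + b) • t := by
    rcases mul_eq_zero.1 ha with rfl | hpt0
    · rw [hc, zero_smul, zero_add, zero_add]
    · rw [hc, sub_eq_zero.1 (norm_eq_zero.1 (pow_eq_zero_iff two_ne_zero |>.1 hpt0)), add_smul]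
  have hpyth : ‖t‖ ^ 2 ≤ ‖p‖ ^ 2 := by
    have := norm_add_sq_eq_norm_sq_add_norm_sq_real hpt
    rw [sub_add_cancel] at this
    nlinarith [mul_self_nonneg ‖p - t‖]
  rcases eq_or_ne t 0 with rfl | ht
  · exact ⟨1, le_rfl, by rw [hc', smul_zero, smul_zero]⟩
  refine ⟨a + b, ?_, hc'⟩
  have hη : (a + b) * ‖t‖ ^ 2 = ‖p‖ ^ 2 := by
    rw [← hct, hc', real_inner_smul_left, real_inner_self_eq_norm_sq]
  have ht2 : 0 < ‖t‖ ^ 2 := by positivity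
  nlinarith

theorem exists_one_le_eq_add_smul_of_equidistant {x p t c : E} (hpt : ⟪p - t, t⟫ = 0)
    (hmem : c ∈ affineSpan ℝ {x, x + (2 : ℝ) • p, x + ((4 : ℝ) • t - (2 : ℝ) • p)})
    (h₁ : dist c x = dist c (x + (2 : ℝ) • p))
    (h₂ : dist c x = dist c (x + ((4 : ℝ) • t - (2 : ℝ) • p))) :
    ∃ η : ℝ, 1 ≤ η ∧ c = x + η • t := by
  obtain ⟨a, b, hab⟩ := exists_sub_eq_of_mem_affineSpan_triple hmem
  have e₁ := two_inner_sub_eq_norm_sq_of_dist_eq h₁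
  have e₂ := two_inner_sub_eq_norm_sq_of_dist_eq h₂
  generalize hd : c - x = d at hab e₁ e₂
  simp only [add_sub_cancel_left, ← real_inner_self_eq_norm_sq, inner_sub_left, inner_sub_right,
    real_inner_smul_left, real_inner_smul_right] at hab e₁ e₂
  have htp : ⟪p, t⟫ = ⟪t, t⟫ := by rwa [inner_sub_left, sub_eq_zero] at hpt
  have hcp : ⟪d, p⟫ = ‖p‖ ^ 2 := by
    rw [← real_inner_self_eq_norm_sq]
    linarith
  have hct : ⟪d, t⟫ = ‖p‖ ^ 2 := by
    rw [real_inner_comm p t, htp] at e₂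
    rw [← real_inner_self_eq_norm_sq]
    linarith
  obtain ⟨η, hη, h⟩ := exists_one_le_smul_of_inner_eq_norm_sq (a := 2 * a - 2 * b) (b := 4 * b)
    hpt (by rw [hab]; module) hcp hct
  exact ⟨η, hη, eq_add_of_sub_eq' (hd.trans h)⟩

end

theorem stmt_14_general {n : ℕ} (U : Set (EuclideanSpace ℝ (Fin n)))
    (hU : ∃ (Q : EuclideanSpace ℝ (Fin n) →ₗ[ℝ] EuclideanSpace ℝ (Fin n))
      (b : EuclideanSpace ℝ (Fin n)), U = {x | Q x = b})
    (PS PU : EuclideanSpace ℝ (Fin n) → EuclideanSpace ℝ (Fin n))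
    (hPU : ∀ y, PU y ∈ U ∧ ∀ w ∈ U, dist y (PU y) ≤ dist y w)
    (RS RU : EuclideanSpace ℝ (Fin n) → EuclideanSpace ℝ (Fin n))
    (hRS : ∀ y, RS y = (2 : ℝ) • PS y - y)
    (hRU : ∀ y, RU y = (2 : ℝ) • PU y - y)
    (CS : EuclideanSpace ℝ (Fin n) → EuclideanSpace ℝ (Fin n))
    (hCS : ∀ x ∈ U,
      CS x ∈ affineSpan ℝ ({x, RS x, RU (RS x)} : Set (EuclideanSpace ℝ (Fin n))) ∧
      dist (CS x) x = dist (CS x) (RS x) ∧ dist (CS x) x = dist (CS x) (RU (RS x))) :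
    ∀ x ∈ U, ∃ η : ℝ, 1 ≤ η ∧ CS x = x + η • (PU (PS x) - x) := by
  obtain ⟨Q, b, rfl⟩ := hU
  set V := (affineSpan ℝ {b}).comap Q.toAffineMap
  have hV : {x | Q x = b} = (V : Set (EuclideanSpace ℝ (Fin n))) := by ext; simp [V]
  have hP : IsNearestPointMap (V : Set _) PU := hV ▸ hPU
  intro x hx
  obtain ⟨hmem, h₁, h₂⟩ := hCS x hx
  rw [hV] at hx
  have hRSx : RS x = x + (2 : ℝ) • (PS x - x) := by rw [hRS]; module
  have hPURSx : PU (RS x) = AffineMap.lineMap x (PU (PS x)) (2 : ℝ) := by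
    rw [← hP.apply_lineMap hx, hRSx, AffineMap.lineMap_apply_module']
    congr 1
    module
  have hRURSx : RU (RS x) = x + ((4 : ℝ) • (PU (PS x) - x) - (2 : ℝ) • (PS x - x)) := by
    rw [hRU, hPURSx, hRSx, AffineMap.lineMap_apply_module']
    module
  have hpt : ⟪(PS x - x) - (PU (PS x) - x), PU (PS x) - x⟫ = 0 := by
    rw [sub_sub_sub_cancel_right]
    exact hP.inner_sub_apply_eq_zero _ (AffineSubspace.vsub_mem_direction (hP _).1 hx)
  rw [hRURSx] at hmem h₂
  rw [hRSx] at hmem h₁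
  exact exists_one_le_eq_add_smul_of_equidistant hpt hmem h₁ h₂

theorem stmt_14 {n : ℕ} (K U : Set (EuclideanSpace ℝ (Fin n)))
    (hKcl : IsClosed K) (hKcv : Convex ℝ K)
    (hU : ∃ (Q : EuclideanSpace ℝ (Fin n) →ₗ[ℝ] EuclideanSpace ℝ (Fin n))
      (b : EuclideanSpace ℝ (Fin n)), U = {x | Q x = b})
    (hKU : (K ∩ U).Nonempty)
    (S : EuclideanSpace ℝ (Fin n) → Set (EuclideanSpace ℝ (Fin n)))
    (hA1 : ∀ x, IsClosed (S x) ∧ Convex ℝ (S x))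
    (hA2 : ∀ x, K ⊆ S x)
    (hA3 : ∀ (z : ℕ → EuclideanSpace ℝ (Fin n)) (zstar : EuclideanSpace ℝ (Fin n)),
      Tendsto z atTop (𝓝 zstar) →
      Tendsto (fun k => Metric.infDist (z k) (S (z k))) atTop (𝓝 0) → zstar ∈ K)
    (PS PU : EuclideanSpace ℝ (Fin n) → EuclideanSpace ℝ (Fin n))
    (hPS : ∀ y, PS y ∈ S y ∧ ∀ w ∈ S y, dist y (PS y) ≤ dist y w)
    (hPU : ∀ y, PU y ∈ U ∧ ∀ w ∈ U, dist y (PU y) ≤ dist y w)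
    (RS RU : EuclideanSpace ℝ (Fin n) → EuclideanSpace ℝ (Fin n))
    (hRS : ∀ y, RS y = (2 : ℝ) • PS y - y)
    (hRU : ∀ y, RU y = (2 : ℝ) • PU y - y)
    (CS : EuclideanSpace ℝ (Fin n) → EuclideanSpace ℝ (Fin n))
    (hCS : ∀ x ∈ U,
      CS x ∈ affineSpan ℝ ({x, RS x, RU (RS x)} : Set (EuclideanSpace ℝ (Fin n))) ∧
      dist (CS x) x = dist (CS x) (RS x) ∧ dist (CS x) x = dist (CS x) (RU (RS x))) :
    ∀ x ∈ U, ∃ η : ℝ, 1 ≤ η ∧ CS x = x + η • (PU (PS x) - x) :=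
  stmt_14_general U hU PS PU hPU RS RU hRS hRU CS hCS
end

section
/- Let f : ℝⁿ → ℝ be convex and C¹ with f(0) = 0 and ∇f(x) = 0 iff x = 0. Let U = ℝⁿ × {0} ⊆ ℝ^{n+1}, g(x, s) = f(x) − s, α(x) = ‖∇f(x)‖² + 1, and T^S(x, 0) = (x − (f(x)/α(x))∇f(x), 0) the MAAP operator with the gradient separating operator. Then lim_{x→0} ‖T^S(x,0)‖/‖(x,0)‖ = 1, so the MAAP sequence x^{k+1} = T^S(x^k), if infinite with x^k ≠ 0, converges sublinearly to 0. -/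
open Filter Topology
open scoped RealInnerProductSpace

theorem stmt_17 {n : ℕ} (f : EuclideanSpace ℝ (Fin n) → ℝ)
    (f' : EuclideanSpace ℝ (Fin n) → EuclideanSpace ℝ (Fin n))
    (hconv : ConvexOn ℝ Set.univ f)
    (hgrad : ∀ x, HasGradientAt f (f' x) x)
    (hcont : Continuous f')
    (hf0 : f 0 = 0)
    (hcrit : ∀ x, f' x = 0 ↔ x = 0)
    (TS : EuclideanSpace ℝ (Fin n) → EuclideanSpace ℝ (Fin n))
    (hTS : ∀ x, TS x = x - (f x / (‖f' x‖ ^ 2 + 1)) • f' x) :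
    Tendsto (fun x : EuclideanSpace ℝ (Fin n) => ‖TS x‖ / ‖x‖)
      (𝓝[≠] (0 : EuclideanSpace ℝ (Fin n))) (𝓝 1) ∧
    ∀ x : ℕ → EuclideanSpace ℝ (Fin n),
      (∀ k, x (k + 1) = TS (x k)) → (∀ k, x k ≠ 0) →
      Tendsto x atTop (𝓝 (0 : EuclideanSpace ℝ (Fin n))) →
      Tendsto (fun k => ‖x (k + 1) - 0‖ / ‖x k - 0‖) atTop (𝓝 1) := by
  have hf'0 : f' 0 = 0 := (hcrit 0).mpr rfl
  have hderiv := (hgrad 0).hasFDerivAt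
  rw [hf'0] at hderiv
  have hlo : (fun x => f x) =o[𝓝 (0 : EuclideanSpace ℝ (Fin n))]
      (fun x : EuclideanSpace ℝ (Fin n) => x) := by
    have h := hderiv.isLittleO
    simpa [hf0] using h
  have hdiv : Tendsto (fun x : EuclideanSpace ℝ (Fin n) => ‖f x‖ / ‖x‖)
      (𝓝 0) (𝓝 0) := hlo.norm_norm.tendsto_div_nhds_zero
  have key : ∀ x : EuclideanSpace ℝ (Fin n), x ≠ 0 →
      |‖TS x‖ / ‖x‖ - 1| ≤ ‖f x‖ / ‖x‖ := by
    intro x hx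
    have hxn : (0:ℝ) < ‖x‖ := norm_pos_iff.mpr hx
    have h3 : ‖TS x - x‖ ≤ ‖f x‖ := by
      rw [hTS]
      have he : x - (f x / (‖f' x‖ ^ 2 + 1)) • f' x - x
          = -((f x / (‖f' x‖ ^ 2 + 1)) • f' x) := by module
      rw [he, norm_neg, norm_smul]
      have hd : (0:ℝ) < ‖f' x‖ ^ 2 + 1 := by positivity
      have hle : ‖f' x‖ ≤ ‖f' x‖ ^ 2 + 1 := by nlinarith [norm_nonneg (f' x)]
      rw [Real.norm_eq_abs, abs_div, abs_of_pos hd, Real.norm_eq_abs]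
      calc |f x| / (‖f' x‖ ^ 2 + 1) * ‖f' x‖
          ≤ |f x| / (‖f' x‖ ^ 2 + 1) * (‖f' x‖ ^ 2 + 1) := by
            apply mul_le_mul_of_nonneg_left hle (by positivity)
        _ = |f x| := by field_simp
    have h1 : ‖TS x‖ / ‖x‖ - 1 = (‖TS x‖ - ‖x‖) / ‖x‖ := by field_simp
    rw [h1, abs_div, abs_of_pos hxn, Real.norm_eq_abs]
    exact div_le_div_of_nonneg_right ((abs_norm_sub_norm_le _ _).trans h3) hxn.le
  have hmain : Tendsto (fun x : EuclideanSpace ℝ (Fin n) => ‖TS x‖ / ‖x‖)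
      (𝓝[≠] 0) (𝓝 1) := by
    have h0 : Tendsto (fun x : EuclideanSpace ℝ (Fin n) => ‖f x‖ / ‖x‖)
        (𝓝[≠] 0) (𝓝 0) := hdiv.mono_left nhdsWithin_le_nhds
    have hz : Tendsto (fun x : EuclideanSpace ℝ (Fin n) => ‖TS x‖ / ‖x‖ - 1)
        (𝓝[≠] 0) (𝓝 0) := by
      apply squeeze_zero_norm' _ h0
      filter_upwards [self_mem_nhdsWithin] with x hx
      simpa [Real.norm_eq_abs] using key x hx
    have := hz.add_const 1
    simpa using this
  refine ⟨hmain, ?_⟩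
  intro x hrec hne hto
  simp only [sub_zero]
  have hx : Tendsto x atTop (𝓝[≠] (0 : EuclideanSpace ℝ (Fin n))) :=
    tendsto_nhdsWithin_of_tendsto_nhds_of_eventually_within _ hto
      (Eventually.of_forall hne)
  have hcomp := hmain.comp hx
  refine hcomp.congr ?_
  intro k
  simp [Function.comp, hrec k]
end

section
/- Let f : ℝⁿ → ℝ be convex and C¹ with f(0) = 0, ∇f(x) ≠ 0 for x ≠ 0, and define θ(x) = f(x)/(‖x‖·‖∇f(x)‖) for x ≠ 0. Then the CARM operator with the gradient separating operator applied at (x, 0) ∈ ℝ^{n+1} equals C^S(x, 0) = (x − (f(x)/‖∇f(x)‖²)∇f(x), 0) and satisfies ‖C^S(x,0)‖²/‖x‖² ≤ 1 − θ(x)², whenever f(x) > 0. -/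
open Set
open scoped RealInnerProductSpace

/-!
The metric projection of `(x, 0)` onto the half-space `⟪(∇f(x), -1), z - (x, 0)⟫ + f(x) ≤ 0` is
`(x, 0) - t (∇f(x), -1)` with `t = f(x) / (‖∇f(x)‖² + 1)`, so `R^S(x, 0) = (x - 2t ∇f(x), 2t)`, and
reflecting through `U = ℝⁿ × {0}` gives `(x - 2t ∇f(x), -2t)`. A point equidistant from these two
mirror images lies in `U`; inside the affine span this leaves a point `(x + μ d, 0)` on the line
through `x` with direction `d = -2t ∇f(x)`, and equidistance from `(x, 0)` determines `μ`.
The bound on `‖C^S(x, 0)‖² / ‖x‖²` follows by expanding the square and using the gradient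
inequality `f(x) ≤ ⟪∇f(x), x⟫`, which is convexity of `f` between `x` and `0`.
-/

theorem ConvexOn.add_fderiv_sub_le {E : Type*} [NormedAddCommGroup E] [NormedSpace ℝ E]
    {s : Set E} {f : E → ℝ} {f' : E →L[ℝ] ℝ} {x y : E} (hf : ConvexOn ℝ s f)
    (hx : x ∈ s) (hy : y ∈ s) (hfx : HasFDerivAt f f' x) :
    f x + f' (y - x) ≤ f y := by
  set L : ℝ →ᵃ[ℝ] E := AffineMap.lineMap x y
  have hline : HasDerivAt (f ∘ L) (f' (y - x)) 0 := by
    refine HasFDerivAt.comp_hasDerivAt (0 : ℝ) ?_ AffineMap.hasDerivAt_lineMap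
    simpa [L] using hfx
  have hslope := (hf.comp_affineMap L).le_slope_of_hasDerivAt
    (by simpa [L] using hx) (by simpa [L] using hy) zero_lt_one hline
  simp only [slope, L, Function.comp_apply, AffineMap.lineMap_apply_zero,
    AffineMap.lineMap_apply_one, sub_zero, vsub_eq_sub, inv_one, one_smul] at hslope
  linarith

theorem ConvexOn.le_inner_of_hasGradientAt_of_map_zero {E : Type*} [NormedAddCommGroup E]
    [InnerProductSpace ℝ E] [CompleteSpace E] {f : E → ℝ} {a x : E}
    (hf : ConvexOn ℝ univ f) (hfx : HasGradientAt f a x) (hf0 : f 0 = 0) :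
    f x ≤ ⟪a, x⟫ := by
  have := hf.add_fderiv_sub_le (mem_univ x) (mem_univ 0) hfx.hasFDerivAt
  simp only [hf0, zero_sub, map_neg, InnerProductSpace.toDual_apply_apply] at this
  linarith

/-- The foot `X - (b / ‖v‖²) • v` is a competitor at distance `b / ‖v‖`, while every point of the
half-space has `⟪v, X - p⟫ ≥ b`; together these force `‖(X - p) - (b / ‖v‖²) • v‖² ≤ 0`. -/
theorem eq_sub_smul_of_isNearest_halfSpace {V : Type*} [NormedAddCommGroup V]
    [InnerProductSpace ℝ V] {v X p : V} {b : ℝ} (hb : 0 < b) (hp : ⟪v, p - X⟫ + b ≤ 0)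
    (hnear : ∀ w, ⟪v, w - X⟫ + b ≤ 0 → dist X p ≤ dist X w) :
    p = X - (b / ‖v‖ ^ 2) • v := by
  have hv : v ≠ 0 := by rintro rfl; simp at hp; linarith
  have hv2 : 0 < ‖v‖ ^ 2 := by positivity
  have hfoot : ⟪v, X - (b / ‖v‖ ^ 2) • v - X⟫ + b = 0 := by
    rw [sub_sub_cancel_left, inner_neg_right, real_inner_smul_right, real_inner_self_eq_norm_sq,
      div_mul_cancel₀ _ hv2.ne']
    ring
  have hdist : ‖X - p‖ ^ 2 ≤ b ^ 2 / ‖v‖ ^ 2 := by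
    have := hnear _ hfoot.le
    rw [dist_eq_norm, dist_eq_norm, sub_sub_cancel, norm_smul,
      Real.norm_of_nonneg (by positivity)] at this
    calc ‖X - p‖ ^ 2 ≤ (b / ‖v‖ ^ 2 * ‖v‖) ^ 2 := by gcongr
      _ = b ^ 2 / ‖v‖ ^ 2 := by field_simp
  have hinner : b ≤ ⟪v, X - p⟫ := by
    rw [← neg_sub, inner_neg_right]; linarith
  have hsq : ‖(X - p) - (b / ‖v‖ ^ 2) • v‖ ^ 2 ≤ 0 := by
    rw [norm_sub_sq_real, real_inner_smul_right, real_inner_comm, norm_smul,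
      Real.norm_of_nonneg (by positivity)]
    have hcross : 2 * (b / ‖v‖ ^ 2) * b ≤ 2 * (b / ‖v‖ ^ 2) * ⟪v, X - p⟫ := by gcongr
    have hb2 : 2 * (b / ‖v‖ ^ 2) * b = 2 * (b ^ 2 / ‖v‖ ^ 2) := by ring
    have hfoot2 : (b / ‖v‖ ^ 2 * ‖v‖) ^ 2 = b ^ 2 / ‖v‖ ^ 2 := by field_simp
    linarith
  have hzero : (X - p) - (b / ‖v‖ ^ 2) • v = 0 := by
    rw [← norm_eq_zero]
    nlinarith [norm_nonneg ((X - p) - (b / ‖v‖ ^ 2) • v)]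
  rw [sub_eq_zero] at hzero
  rw [← hzero]
  abel

theorem norm_sub_smul_sq_div_norm_sq_le {E : Type*} [NormedAddCommGroup E]
    [InnerProductSpace ℝ E] {x a : E} {s : ℝ} (hs : 0 < s) (hsa : s ≤ ⟪a, x⟫) :
    ‖x - (s / ‖a‖ ^ 2) • a‖ ^ 2 / ‖x‖ ^ 2 ≤ 1 - (s / (‖x‖ * ‖a‖)) ^ 2 := by
  have hx : x ≠ 0 := by rintro rfl; simp at hsa; linarith
  have ha : a ≠ 0 := by rintro rfl; simp at hsa; linarith
  have hx2 : 0 < ‖x‖ ^ 2 := by positivity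
  have ha2 : 0 < ‖a‖ ^ 2 := by positivity
  have hexpand : ‖x - (s / ‖a‖ ^ 2) • a‖ ^ 2
      = ‖x‖ ^ 2 - 2 * (s / ‖a‖ ^ 2) * ⟪a, x⟫ + s ^ 2 / ‖a‖ ^ 2 := by
    rw [norm_sub_sq_real, real_inner_smul_right, real_inner_comm, norm_smul, mul_pow,
      Real.norm_eq_abs, sq_abs]
    field_simp
  have hcross : s ^ 2 / ‖a‖ ^ 2 ≤ s / ‖a‖ ^ 2 * ⟪a, x⟫ := by
    rw [div_mul_eq_mul_div]; gcongr; nlinarith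
  have hrhs : (1 - (s / (‖x‖ * ‖a‖)) ^ 2) * ‖x‖ ^ 2 = ‖x‖ ^ 2 - s ^ 2 / ‖a‖ ^ 2 := by
    field_simp
  rw [div_le_iff₀ hx2, hexpand, hrhs]
  linarith

theorem exists_eq_add_smul_add_smul_of_mem_affineSpan_triple {V : Type*} [AddCommGroup V]
    [Module ℝ V] {c p q r : V} (hc : c ∈ affineSpan ℝ {p, q, r}) :
    ∃ α β : ℝ, c = p + α • (q - p) + β • (r - p) := by
  have hmem : c -ᵥ p ∈ vectorSpan ℝ ({p, q, r} : Set V) :=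
    vsub_mem_vectorSpan_of_mem_affineSpan_of_mem_affineSpan hc
      (mem_affineSpan ℝ (mem_insert p {q, r}))
  rw [vectorSpan_eq_span_vsub_set_right ℝ (mem_insert p {q, r})] at hmem
  simp only [image_insert_eq, image_singleton, vsub_eq_sub, sub_self,
    Submodule.span_insert_zero] at hmem
  obtain ⟨α, β, h⟩ := Submodule.mem_span_pair.mp hmem
  exact ⟨α, β, by rw [add_assoc, h]; abel⟩

namespace WithLp

theorem prod_dist_sq_eq_of_L2 {α β : Type*} [NormedAddCommGroup α]
    [NormedAddCommGroup β] (x y : WithLp 2 (α × β)) :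
    dist x y ^ 2 = dist x.fst y.fst ^ 2 + dist x.snd y.snd ^ 2 := by
  rw [prod_dist_eq_of_L2, Real.sq_sqrt (by positivity)]

theorem prod_eq_toLp_fst_zero_of_isNearest {α β : Type*} [NormedAddCommGroup α]
    [NormedAddCommGroup β] {r p : WithLp 2 (α × β)} (hp : p.snd = 0)
    (hnear : ∀ w : WithLp 2 (α × β), w.snd = 0 → dist r p ≤ dist r w) :
    p = toLp 2 (r.fst, 0) := by
  have h := hnear (toLp 2 (r.fst, 0)) rfl
  rw [← sq_le_sq₀ dist_nonneg dist_nonneg, prod_dist_sq_eq_of_L2, prod_dist_sq_eq_of_L2, hp] at h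
  simp only [toLp_fst, toLp_snd, dist_self] at h
  have hfst : dist r.fst p.fst = 0 := by nlinarith [dist_nonneg (x := r.fst) (y := p.fst)]
  rw [WithLp.ext_iff]
  exact Prod.ext (dist_eq_zero.mp hfst).symm hp

/-- Equidistance from the mirror images `(x + d, ±h)` forces the second coordinate to vanish;
equidistance from `(x, 0)` and `(x + d, h)` then reads `(2μ - 1) ‖d‖² = h²`. -/
theorem prod_eq_toLp_of_mem_affineSpan_of_dist_eq {E : Type*} [NormedAddCommGroup E]
    [NormedSpace ℝ E] {x d : E} {h : ℝ} {c : WithLp 2 (E × ℝ)}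
    (hc : c ∈ affineSpan ℝ {toLp 2 (x, 0), toLp 2 (x + d, h), toLp 2 (x + d, -h)})
    (hB : dist c (toLp 2 (x, 0)) = dist c (toLp 2 (x + d, h)))
    (hB' : dist c (toLp 2 (x, 0)) = dist c (toLp 2 (x + d, -h))) :
    c = toLp 2 (x + ((‖d‖ ^ 2 + h ^ 2) / (2 * ‖d‖ ^ 2)) • d, 0) := by
  obtain ⟨α, β, hc⟩ := exists_eq_add_smul_add_smul_of_mem_affineSpan_triple hc
  have hfst : c.fst = x + (α + β) • d := by rw [hc]; simp; module
  have hsnd : c.snd = (α - β) * h := by rw [hc]; simp; ring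
  have hdist (y : E) (s : ℝ) :
      dist c (toLp 2 (y, s)) ^ 2 = ‖x + (α + β) • d - y‖ ^ 2 + ((α - β) * h - s) ^ 2 := by
    rw [prod_dist_sq_eq_of_L2, dist_eq_norm, Real.dist_eq, sq_abs, hfst, hsnd, toLp_fst,
      toLp_snd]
  have hB2 := congrArg (· ^ 2) hB
  have hB'2 := congrArg (· ^ 2) hB'
  simp only [hdist, add_sub_cancel_left, add_sub_add_left_eq_sub] at hB2 hB'2
  rw [show (α + β) • d - d = (α + β - 1) • d by module] at hB2 hB'2
  simp only [norm_smul, mul_pow, Real.norm_eq_abs, sq_abs] at hB2 hB'2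
  have hσ : (α - β) * h = 0 := by
    apply pow_eq_zero_iff (n := 2) two_ne_zero |>.mp
    linear_combination (α - β) / 4 * (hB2 - hB'2)
  have hμ : (2 * (α + β) - 1) * ‖d‖ ^ 2 = h ^ 2 := by
    rw [hσ] at hB2
    linear_combination hB2
  rw [WithLp.ext_iff]
  refine Prod.ext ?_ (hsnd.trans hσ)
  change c.fst = _
  rw [hfst]
  rcases eq_or_ne d 0 with rfl | hd
  · simp
  · congr 2
    field_simp
    linarith

end WithLp

theorem stmt_18_general {n : ℕ} (f : EuclideanSpace ℝ (Fin n) → ℝ)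
    (f' : EuclideanSpace ℝ (Fin n) → EuclideanSpace ℝ (Fin n))
    (hconv : ConvexOn ℝ Set.univ f)
    (hgrad : ∀ y, HasGradientAt f (f' y) y)
    (hf0 : f 0 = 0)
    (x : EuclideanSpace ℝ (Fin n)) (hfx : 0 < f x)
    -- the ambient space ℝ^{n+1} is modeled as the ℓ² product E ×₂ ℝ
    (emb : EuclideanSpace ℝ (Fin n) × ℝ ≃ WithLp 2 (EuclideanSpace ℝ (Fin n) × ℝ))
    (hemb : emb = (WithLp.equiv 2 (EuclideanSpace ℝ (Fin n) × ℝ)).symm)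
    (U : Set (WithLp 2 (EuclideanSpace ℝ (Fin n) × ℝ)))
    (hUdef : U = {p | (emb.symm p).2 = 0})
    -- the separating half-space at (x,0), given by the gradient (∇f(x), -1) of g(y,s)=f(y)-s
    (Sx : Set (WithLp 2 (EuclideanSpace ℝ (Fin n) × ℝ)))
    (hSx : Sx = {z | ⟪emb (f' x, -1), z - emb (x, 0)⟫ + f x ≤ 0})
    -- projection of (x,0) onto the half-space, and the reflection
    (pS : WithLp 2 (EuclideanSpace ℝ (Fin n) × ℝ))
    (hpS : pS ∈ Sx ∧ ∀ w ∈ Sx, dist (emb (x, 0)) pS ≤ dist (emb (x, 0)) w)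
    (rS : WithLp 2 (EuclideanSpace ℝ (Fin n) × ℝ))
    (hrS : rS = (2 : ℝ) • pS - emb (x, 0))
    -- projection of R^S(x,0) onto U, and the reflection
    (pU : WithLp 2 (EuclideanSpace ℝ (Fin n) × ℝ))
    (hpU : pU ∈ U ∧ ∀ w ∈ U, dist rS pU ≤ dist rS w)
    (rU : WithLp 2 (EuclideanSpace ℝ (Fin n) × ℝ))
    (hrU : rU = (2 : ℝ) • pU - rS)
    -- the circumcenter of (x,0), R^S(x,0), R_U(R^S(x,0))
    (c : WithLp 2 (EuclideanSpace ℝ (Fin n) × ℝ))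
    (hc : c ∈ affineSpan ℝ ({emb (x, 0), rS, rU} :
        Set (WithLp 2 (EuclideanSpace ℝ (Fin n) × ℝ))) ∧
      dist c (emb (x, 0)) = dist c rS ∧ dist c (emb (x, 0)) = dist c rU) :
    c = emb (x - (f x / ‖f' x‖ ^ 2) • f' x, 0) ∧
    ‖x - (f x / ‖f' x‖ ^ 2) • f' x‖ ^ 2 / ‖x‖ ^ 2 ≤
      1 - (f x / (‖x‖ * ‖f' x‖)) ^ 2 := by
  subst hemb hUdef hSx
  simp only [WithLp.equiv_symm_apply, WithLp.equiv_apply, Equiv.symm_symm] at hpS hrS hpU hc ⊢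
  set a := f' x
  have hgrad_ineq : f x ≤ ⟪a, x⟫ := hconv.le_inner_of_hasGradientAt_of_map_zero (hgrad x) hf0
  have ha : ‖a‖ ≠ 0 := by
    rw [norm_ne_zero_iff]; rintro ha; rw [ha, inner_zero_left] at hgrad_ineq; linarith
  set t := f x / (‖a‖ ^ 2 + 1)
  set d := -(2 * t) • a
  have hrS' : rS = WithLp.toLp 2 (x + d, 2 * t) := by
    have hv : ‖WithLp.toLp 2 (a, (-1 : ℝ))‖ ^ 2 = ‖a‖ ^ 2 + 1 := by
      rw [WithLp.prod_norm_sq_eq_of_L2]; simp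
    rw [hrS, eq_sub_smul_of_isNearest_halfSpace hfx hpS.1 hpS.2, hv, ← WithLp.toLp_smul,
      ← WithLp.toLp_sub, ← WithLp.toLp_smul, ← WithLp.toLp_sub]
    exact congrArg _ (Prod.ext (by simp [d, t]; module) (by simp [t]))
  have hpU' : pU = WithLp.toLp 2 (x + d, 0) := by
    rw [WithLp.prod_eq_toLp_fst_zero_of_isNearest (p := pU) (r := rS) hpU.1 hpU.2, hrS',
      WithLp.toLp_fst]
  have hrU' : rU = WithLp.toLp 2 (x + d, -(2 * t)) := by
    rw [hrU, hpU', hrS', ← WithLp.toLp_smul, ← WithLp.toLp_sub]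
    exact congrArg _ (Prod.ext (by simp; module) (by simp))
  rw [hrS', hrU'] at hc
  refine ⟨?_, norm_sub_smul_sq_div_norm_sq_le hfx hgrad_ineq⟩
  rw [WithLp.prod_eq_toLp_of_mem_affineSpan_of_dist_eq hc.1 hc.2.1 hc.2.2]
  have hnd : ‖d‖ = 2 * t * ‖a‖ := by
    rw [norm_smul, norm_neg, Real.norm_of_nonneg (by positivity)]
  have hμ : (‖d‖ ^ 2 + (2 * t) ^ 2) / (2 * ‖d‖ ^ 2) * -(2 * t) = -(f x / ‖a‖ ^ 2) := by
    rw [hnd]; field_simp; simp only [t]; field_simp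
  rw [smul_smul, hμ, neg_smul, ← sub_eq_add_neg]

theorem stmt_18 {n : ℕ} (f : EuclideanSpace ℝ (Fin n) → ℝ)
    (f' : EuclideanSpace ℝ (Fin n) → EuclideanSpace ℝ (Fin n))
    (hconv : ConvexOn ℝ Set.univ f)
    (hgrad : ∀ y, HasGradientAt f (f' y) y)
    (hf0 : f 0 = 0)
    (hcrit : ∀ y, y ≠ 0 → f' y ≠ 0)
    (x : EuclideanSpace ℝ (Fin n)) (hfx : 0 < f x)
    -- the ambient space ℝ^{n+1} is modeled as the ℓ² product E ×₂ ℝ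
    (emb : EuclideanSpace ℝ (Fin n) × ℝ ≃ WithLp 2 (EuclideanSpace ℝ (Fin n) × ℝ))
    (hemb : emb = (WithLp.equiv 2 (EuclideanSpace ℝ (Fin n) × ℝ)).symm)
    (U : Set (WithLp 2 (EuclideanSpace ℝ (Fin n) × ℝ)))
    (hUdef : U = {p | (emb.symm p).2 = 0})
    -- the separating half-space at (x,0), given by the gradient (∇f(x), -1) of g(y,s)=f(y)-s
    (Sx : Set (WithLp 2 (EuclideanSpace ℝ (Fin n) × ℝ)))
    (hSx : Sx = {z | ⟪emb (f' x, -1), z - emb (x, 0)⟫ + f x ≤ 0})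
    -- projection of (x,0) onto the half-space, and the reflection
    (pS : WithLp 2 (EuclideanSpace ℝ (Fin n) × ℝ))
    (hpS : pS ∈ Sx ∧ ∀ w ∈ Sx, dist (emb (x, 0)) pS ≤ dist (emb (x, 0)) w)
    (rS : WithLp 2 (EuclideanSpace ℝ (Fin n) × ℝ))
    (hrS : rS = (2 : ℝ) • pS - emb (x, 0))
    -- projection of R^S(x,0) onto U, and the reflection
    (pU : WithLp 2 (EuclideanSpace ℝ (Fin n) × ℝ))
    (hpU : pU ∈ U ∧ ∀ w ∈ U, dist rS pU ≤ dist rS w)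
    (rU : WithLp 2 (EuclideanSpace ℝ (Fin n) × ℝ))
    (hrU : rU = (2 : ℝ) • pU - rS)
    -- the circumcenter of (x,0), R^S(x,0), R_U(R^S(x,0))
    (c : WithLp 2 (EuclideanSpace ℝ (Fin n) × ℝ))
    (hc : c ∈ affineSpan ℝ ({emb (x, 0), rS, rU} :
        Set (WithLp 2 (EuclideanSpace ℝ (Fin n) × ℝ))) ∧
      dist c (emb (x, 0)) = dist c rS ∧ dist c (emb (x, 0)) = dist c rU) :
    c = emb (x - (f x / ‖f' x‖ ^ 2) • f' x, 0) ∧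
    ‖x - (f x / ‖f' x‖ ^ 2) • f' x‖ ^ 2 / ‖x‖ ^ 2 ≤
      1 - (f x / (‖x‖ * ‖f' x‖)) ^ 2 :=
  stmt_18_general f f' hconv hgrad hf0 x hfx emb hemb U hUdef Sx hSx pS hpS rS hrS pU hpU rU hrU c
    hc
end

section
/- Let φ : ℝ → ℝ be strictly convex, C¹, with φ(0) < 0 and φ'(0) = 0, and let f(x) = φ(‖x‖) on ℝⁿ, K = epi(f) ⊆ ℝ^{n+1}, U = ℝⁿ × {0}. Let r > 0 satisfy φ(r) = 0 and let x* ∈ ℝⁿ with ‖x*‖ = r. Then the CARM operator C^S(x,0) = ((1 − φ(t)/(t φ'(t))) x, 0), with t = ‖x‖, satisfies lim_{x→x*, x ∥ x*} ‖C^S(x,0) − (x*,0)‖ / ‖(x,0) − (x*,0)‖ = 0, i.e., the CARM iteration converges superlinearly along the ray through x*. -/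
/-!
Along the ray through `xstar`, the operator acts on the radius `t = ‖x‖` as the Newton step
`t ↦ t - φ t / φ' t` for the root `r` of `φ`, so the ratio in question is the error ratio of
Newton's method, `|1 - slope φ r t / φ' t|`. Strict convexity makes `φ'` strictly increasing,
hence `φ' r > φ' 0 = 0`, and continuous by Darboux's theorem; thus both `slope φ r t` and
`φ' t` tend to `φ' r ≠ 0`.
-/

open Filter Topology Set

theorem StrictConvexOn.strictMono_of_hasDerivAt {f f' : ℝ → ℝ} (hf : StrictConvexOn ℝ univ f)
    (hf' : ∀ x, HasDerivAt f (f' x) x) : StrictMono f' := fun a b hab =>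
  (hf.lt_slope_of_hasDerivAt trivial trivial hab (hf' a)).trans
    (hf.slope_lt_of_hasDerivAt trivial trivial hab (hf' b))

theorem StrictMono.continuous_of_hasDerivAt {f f' : ℝ → ℝ} (hf' : StrictMono f')
    (hf : ∀ x, HasDerivAt f (f' x) x) : Continuous f' := by
  refine continuous_iff_continuousAt.2 fun a =>
    continuousAt_of_monotoneOn_of_image_mem_nhds (hf'.monotone.monotoneOn univ) univ_mem ?_
  have hdarboux : (f' '' univ).OrdConnected :=
    ordConnected_univ.image_hasDerivWithinAt fun x _ => (hf x).hasDerivWithinAt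
  exact mem_of_superset (Icc_mem_nhds (hf' (sub_one_lt a)) (hf' (lt_add_one a)))
    (hdarboux.out (mem_image_of_mem _ trivial) (mem_image_of_mem _ trivial))

theorem newton_step_sub_eq_mul_slope {f f' : ℝ → ℝ} {r t : ℝ} (hr : f r = 0) (ht : t ≠ r) :
    t - f t / f' t - r = (t - r) * (1 - slope f r t / f' t) := by
  rw [slope_def_field, hr, sub_zero, mul_sub, mul_one, ← mul_div_assoc,
    mul_div_cancel₀ _ (sub_ne_zero.2 ht)]
  ring

theorem tendsto_abs_newton_step_sub_div {f f' : ℝ → ℝ} {r : ℝ} (hr : f r = 0)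
    (hf : HasDerivAt f (f' r) r) (hf' : ContinuousAt f' r) (hr' : f' r ≠ 0) :
    Tendsto (fun t => |t - f t / f' t - r| / |t - r|) (𝓝[≠] r) (𝓝 0) := by
  have hratio : Tendsto (fun t => slope f r t / f' t) (𝓝[≠] r) (𝓝 1) := by
    rw [← div_self hr']
    exact (hasDerivAt_iff_tendsto_slope.1 hf).div (hf'.mono_left nhdsWithin_le_nhds) hr'
  have habs : Tendsto (fun t => |1 - slope f r t / f' t|) (𝓝[≠] r) (𝓝 0) := by
    simpa using ((tendsto_const_nhds (x := (1 : ℝ))).sub hratio).abs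
  refine habs.congr' ?_
  filter_upwards [self_mem_nhdsWithin] with t (ht : t ≠ r)
  rw [newton_step_sub_eq_mul_slope hr ht, abs_mul,
    mul_div_cancel_left₀ _ (abs_ne_zero.2 (sub_ne_zero.2 ht))]

theorem norm_smul_sub_div_norm_smul_sub {E : Type*} [NormedAddCommGroup E] [NormedSpace ℝ E]
    {v : E} (hv : v ≠ 0) (a b : ℝ) : ‖a • v - v‖ / ‖b • v - v‖ = |a - 1| / |b - 1| := by
  have hsub (c : ℝ) : c • v - v = (c - 1) • v := by rw [sub_smul, one_smul]
  rw [hsub, hsub, norm_smul, norm_smul, Real.norm_eq_abs, Real.norm_eq_abs,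
    mul_div_mul_right _ _ (norm_ne_zero_iff.2 hv)]

theorem norm_mul_div_smul_sub_div_norm_div_smul_sub {E : Type*} [NormedAddCommGroup E]
    [NormedSpace ℝ E] {v : E} {r t y d : ℝ} (hr : 0 < r) (ht : t ≠ 0) (hv : ‖v‖ = r) :
    ‖((1 - y / (t * d)) * (t / r)) • v - v‖ / ‖(t / r) • v - v‖ = |t - y / d - r| / |t - r| := by
  have hv0 : v ≠ 0 := norm_pos_iff.1 (hv ▸ hr)
  rw [norm_smul_sub_div_norm_smul_sub hv0]
  have h1 : (1 - y / (t * d)) * (t / r) - 1 = (t - y / d - r) / r := by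
    rw [sub_mul, one_mul, div_mul_eq_div_div, div_mul_div_comm, div_mul_cancel₀ _ ht]
    field_simp
  have h2 : t / r - 1 = (t - r) / r := by field_simp
  rw [h1, h2, abs_div, abs_div, div_div_div_cancel_right₀ (abs_ne_zero.2 hr.ne')]

theorem stmt_19_general {n : ℕ} (φ : ℝ → ℝ) (φ' : ℝ → ℝ)
    (hconv : StrictConvexOn ℝ Set.univ φ)
    (hderiv : ∀ t, HasDerivAt φ (φ' t) t)
    (hφ'0 : φ' 0 = 0)
    (r : ℝ) (hr : 0 < r) (hφr : φ r = 0)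
    (xstar : EuclideanSpace ℝ (Fin n)) (hxstar : ‖xstar‖ = r)
    (CS : EuclideanSpace ℝ (Fin n) → EuclideanSpace ℝ (Fin n))
    (hCS : ∀ x : EuclideanSpace ℝ (Fin n),
      CS x = (1 - φ ‖x‖ / (‖x‖ * φ' ‖x‖)) • x) :
    Tendsto (fun t : ℝ => ‖CS ((t / r) • xstar) - xstar‖ / ‖(t / r) • xstar - xstar‖)
      (𝓝[>] r) (𝓝 0) := by
  have hmono : StrictMono φ' := hconv.strictMono_of_hasDerivAt hderiv
  have hφ'r : φ' r ≠ 0 := (hφ'0 ▸ hmono hr).ne'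
  have hnewton := (tendsto_abs_newton_step_sub_div hφr (hderiv r)
    (hmono.continuous_of_hasDerivAt hderiv).continuousAt hφ'r).mono_left (nhdsGT_le_nhdsNE r)
  refine hnewton.congr' ?_
  filter_upwards [self_mem_nhdsWithin] with t (ht : r < t)
  have ht0 : 0 < t := hr.trans ht
  have hnorm : ‖(t / r) • xstar‖ = t := by
    rw [norm_smul, hxstar, Real.norm_of_nonneg (div_pos ht0 hr).le, div_mul_cancel₀ _ hr.ne']
  rw [hCS, hnorm, smul_smul, norm_mul_div_smul_sub_div_norm_div_smul_sub hr ht0.ne' hxstar]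

theorem stmt_19 {n : ℕ} (φ : ℝ → ℝ) (φ' : ℝ → ℝ)
    (hconv : StrictConvexOn ℝ Set.univ φ)
    (hderiv : ∀ t, HasDerivAt φ (φ' t) t)
    (hφ0 : φ 0 < 0) (hφ'0 : φ' 0 = 0)
    (r : ℝ) (hr : 0 < r) (hφr : φ r = 0)
    (xstar : EuclideanSpace ℝ (Fin n)) (hxstar : ‖xstar‖ = r)
    (CS : EuclideanSpace ℝ (Fin n) → EuclideanSpace ℝ (Fin n))
    (hCS : ∀ x : EuclideanSpace ℝ (Fin n),
      CS x = (1 - φ ‖x‖ / (‖x‖ * φ' ‖x‖)) • x) :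
    Tendsto (fun t : ℝ => ‖CS ((t / r) • xstar) - xstar‖ / ‖(t / r) • xstar - xstar‖)
      (𝓝[>] r) (𝓝 0) :=
  stmt_19_general φ φ' hconv hderiv hφ'0 r hr hφr xstar hxstar CS hCS
end
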